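/- arXiv:2103.05741 — 6 statements merged into one kernel-verified Lean document; each statement's English description precedes it below -/
import Mathlib

section
/- Let X be a measurable space, k : X × X → ℝ a bounded measurable positive definite kernel, γ ∈ (0,1), q : X → ℝ and g : X → ℝ bounded measurable functions, and n ≥ 1. Let (Ω, 𝔉, P) be a probability space carrying random variables X_i : Ω → X, X'_i : Ω → X, R_i : Ω → ℝ (i = 1,…,n) such that B̂q(X_i, X'_i, R_i) is bounded and, for every i, E[ B̂q(X_i, X'_i, R_i) | 𝒢_i ] = g(X_i) almost surely, where 𝒢_i is the σ-algebra generated by (X_j, X'_j, R_j)_{j<i} together with X_i. Let c ∈ (0,∞) satisfy (B̂q(X_i, X'_i, R_i) − g(X_i))²·k(X_i, X_i) ≤ c almost surely for every i. Then for every δ ∈ (0,1), with probability at least 1 − δ, | sqrt( (1/n²) Σ_{i,j=1}^n B̂q(X_i,X'_i,R_i)·k(X_i,X_j)·B̂q(X_j,X'_j,R_j) ) − sqrt( (1/n²) Σ_{i,j=1}^n g(X_i)·k(X_i,X_j)·g(X_j) ) | ≤ sqrt( 2·c·log(2/δ) / n ). In particular, if g is identically zero, then with probability at least 1 − δ, sqrt(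 (1/n²) Σ_{i,j=1}^n B̂q(X_i,X'_i,R_i)·k(X_i,X_j)·B̂q(X_j,X'_j,R_j) ) ≤ sqrt( 2·c·log(2/δ) / n ). -/
/-!
Write `A i = B̂q(X_i, X'_i, R_i) - g(X_i)`. By the conditional-mean hypothesis the `A i` are
martingale differences, and the reverse triangle inequality for the kernel seminorm reduces
the claim to a bound on `N = √(Σ A_i k(X_i,X_j) A_j)`, the RKHS norm of `Σ A_i k(X_i, ·)`.
Following Pinelis, `cosh (l N_m)` of the partial sums is a supermartingale up to the factor
`cosh (l √c)`: adding one term turns `N²` into `N² + 2 A_m H_m + A_m² k(X_m,X_m)` with `H_m`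
known at time `m`, and convexity of `u ↦ cosh √u` bounds the new `cosh` by
`cosh (l N) cosh (l √c)` plus a multiple of `A_m` whose conditional mean vanishes.
Hence `E cosh (l N) ≤ cosh (l √c)ⁿ ≤ exp (n c l² / 2)`, and Markov's inequality at
`l = T / (n c)` gives `P(N ≥ T) ≤ 2 exp (-T² / (2 n c))`.
-/

open MeasureTheory ProbabilityTheory Real Set Matrix
open scoped Nat RealInnerProductSpace

theorem Real.sinh_le_mul_cosh {x : ℝ} (hx : 0 ≤ x) : sinh x ≤ x * cosh x := by
  refine hasSum_le (fun k => ?_) (hasSum_sinh x) ((hasSum_cosh x).mul_left x)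
  rw [pow_succ', mul_div_assoc]
  gcongr
  omega

theorem convexOn_cosh_sqrt : ConvexOn ℝ (Ici 0) fun u => cosh √u := by
  have hsum : ∀ u ∈ Ici (0 : ℝ), HasSum (fun k => u ^ k / (2 * k)!) (cosh √u) := fun u hu => by
    simpa only [pow_mul, sq_sqrt (mem_Ici.mp hu)] using hasSum_cosh √u
  refine ⟨convex_Ici 0, fun x hx y hy a b ha hb hab => ?_⟩
  refine hasSum_le (fun k => ?_) (hsum _ (convex_Ici 0 hx hy ha hb hab))
    (((hsum x hx).mul_left a).add ((hsum y hy).mul_left b))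
  simp only [smul_eq_mul, mul_div_assoc', ← add_div]
  gcongr
  exact (convexOn_pow k).2 hx hy ha hb hab

theorem cosh_sqrt_sq (x : ℝ) : cosh √(x ^ 2) = cosh x := by
  rw [sqrt_sq_eq_abs, cosh_abs]

/-- The chord of the convex function `u ↦ cosh √u` between `(l * (a - β))²` and
`(l * (a + β))²`. -/
theorem cosh_mul_sqrt_le {l a β w : ℝ} (ha : 0 ≤ a) (hβ : 0 < β) (hw : |w| ≤ β) :
    cosh (l * √(a ^ 2 + 2 * a * w + β ^ 2)) ≤
      cosh (l * a) * cosh (l * β) + w * (sinh (l * a) * sinh (l * β) / β) := by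
  obtain ⟨hw₁, hw₂⟩ := abs_le.mp hw
  set t := (β + w) / (2 * β)
  have ht₀ : 0 ≤ t := div_nonneg (by linarith) (by positivity)
  have ht₁ : 0 ≤ 1 - t := by rw [sub_nonneg, div_le_one (by positivity)]; linarith
  have hconv := convexOn_cosh_sqrt.2 (mem_Ici.mpr (sq_nonneg (l * (a - β))))
    (mem_Ici.mpr (sq_nonneg (l * (a + β)))) ht₁ ht₀ (sub_add_cancel 1 t)
  have hmid : (1 - t) • (l * (a - β)) ^ 2 + t • (l * (a + β)) ^ 2 =
      (l * √(a ^ 2 + 2 * a * w + β ^ 2)) ^ 2 := by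
    have hw₀ : 0 ≤ a * (w + β) := mul_nonneg ha (by linarith)
    rw [mul_pow, mul_pow, mul_pow, sq_sqrt (by nlinarith [sq_nonneg (a - β)])]
    simp only [smul_eq_mul, t]; field_simp; ring
  dsimp only at hconv
  rw [hmid, cosh_sqrt_sq, cosh_sqrt_sq, cosh_sqrt_sq, mul_sub, mul_add, cosh_sub, cosh_add] at hconv
  refine hconv.trans_eq ?_
  simp only [smul_eq_mul, t]; field_simp; ring

theorem cosh_mul_sqrt_le_cosh_mul_sqrt (l : ℝ) {x y : ℝ} (h : x ≤ y) :
    cosh (l * √x) ≤ cosh (l * √y) := by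
  rw [cosh_le_cosh, abs_mul, abs_mul, abs_of_nonneg (sqrt_nonneg x),
    abs_of_nonneg (sqrt_nonneg y)]
  gcongr

theorem cosh_mul_sqrt_le_of_sq_le {l Q Q' p β : ℝ} (hQ : 0 ≤ Q) (hβ : 0 < β)
    (hp : p ^ 2 ≤ Q * β ^ 2) (hQ' : Q' ≤ Q + 2 * p + β ^ 2) :
    cosh (l * √Q') ≤
      cosh (l * √Q) * cosh (l * β) + p * (sinh (l * √Q) / √Q * (sinh (l * β) / β)) := by
  refine (cosh_mul_sqrt_le_cosh_mul_sqrt l hQ').trans ?_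
  rcases hQ.eq_or_lt with rfl | hQ
  · obtain rfl : p = 0 := pow_eq_zero_iff two_ne_zero |>.mp (by nlinarith [sq_nonneg p])
    simp [sqrt_sq hβ.le]
  set a := √Q
  have ha : 0 < a := sqrt_pos.mpr hQ
  have haQ : a ^ 2 = Q := sq_sqrt hQ.le
  have hw : |p / a| ≤ β := by
    refine abs_le_of_sq_le_sq ?_ hβ.le
    rw [div_pow, haQ, div_le_iff₀ hQ]
    linarith
  have hch := cosh_mul_sqrt_le (l := l) ha.le hβ hw
  rw [mul_assoc 2 a, mul_div_cancel₀ p ha.ne', haQ] at hch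
  refine hch.trans_eq ?_
  field_simp

theorem abs_sinh_mul_div_le (l s : ℝ) : |sinh (l * s) / s| ≤ |l| * cosh (l * s) := by
  rcases eq_or_ne s 0 with rfl | hs
  · simp
  rw [abs_div, div_le_iff₀ (abs_pos.mpr hs), abs_sinh, ← cosh_abs (l * s), abs_mul]
  calc sinh (|l| * |s|) ≤ |l| * |s| * cosh (|l| * |s|) := sinh_le_mul_cosh (by positivity)
    _ = _ := by ring

theorem Matrix.PosSemidef.exists_dotProduct_mulVec_eq_inner {n : Type*} [Fintype n]
    {M : Matrix n n ℝ} (hM : M.PosSemidef) :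
    ∃ (m : ℕ) (F : (n → ℝ) →ₗ[ℝ] EuclideanSpace ℝ (Fin m)),
      ∀ u v, u ⬝ᵥ M *ᵥ v = ⟪F u, F v⟫ := by
  obtain ⟨m, w, rfl⟩ := posSemidef_iff_eq_sum_vecMulVec.mp hM
  refine ⟨m, (WithLp.linearEquiv 2 ℝ (Fin m → ℝ)).symm.toLinearMap ∘ₗ (Matrix.of w).mulVecLin,
    fun u v => ?_⟩
  simp only [star_trivial, sum_mulVec, vecMulVec_mulVec, op_smul_eq_smul, dotProduct_sum,
    dotProduct_smul, smul_eq_mul, LinearMap.coe_comp, LinearEquiv.coe_coe, Function.comp_apply,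
    mulVecBilin_apply, WithLp.linearEquiv_symm_apply, AddEquiv.toEquiv_eq_coe,
    Equiv.invFun_as_coe, AddEquiv.coe_toEquiv_symm, WithLp.addEquiv_symm_apply,
    EuclideanSpace.inner_eq_star_dotProduct]
  simp only [dotProduct, mul_comm, mulVec, of_apply]

theorem Matrix.IsSymm.add_dotProduct_mulVec_add {n : Type*} [Fintype n] {M : Matrix n n ℝ}
    (hM : M.IsSymm) (u v : n → ℝ) :
    (u + v) ⬝ᵥ M *ᵥ (u + v) = u ⬝ᵥ M *ᵥ u + 2 * (u ⬝ᵥ M *ᵥ v) + v ⬝ᵥ M *ᵥ v := by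
  rw [mulVec_add, dotProduct_add, add_dotProduct, add_dotProduct, dotProduct_mulVec v,
    ← mulVec_transpose, hM.eq, dotProduct_comm _ u]
  ring

namespace Matrix.PosSemidef

variable {n : Type*} [Fintype n] {M : Matrix n n ℝ}

theorem dotProduct_mulVec_self_nonneg (hM : M.PosSemidef) (u : n → ℝ) : 0 ≤ u ⬝ᵥ M *ᵥ u := by
  simpa using hM.dotProduct_mulVec_nonneg u

theorem sq_dotProduct_mulVec_le (hM : M.PosSemidef) (u v : n → ℝ) :
    (u ⬝ᵥ M *ᵥ v) ^ 2 ≤ (u ⬝ᵥ M *ᵥ u) * (v ⬝ᵥ M *ᵥ v) := by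
  obtain ⟨m, F, hF⟩ := hM.exists_dotProduct_mulVec_eq_inner
  simpa only [hF, sq] using real_inner_mul_inner_self_le (F u) (F v)

theorem abs_sqrt_sub_sqrt_le (hM : M.PosSemidef) (u v : n → ℝ) :
    |√(u ⬝ᵥ M *ᵥ u) - √(v ⬝ᵥ M *ᵥ v)| ≤ √((u - v) ⬝ᵥ M *ᵥ (u - v)) := by
  obtain ⟨m, F, hF⟩ := hM.exists_dotProduct_mulVec_eq_inner
  simpa only [hF, real_inner_self_eq_norm_sq, Real.sqrt_sq (norm_nonneg _), map_sub]
    using abs_norm_sub_norm_le (F u) (F v)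

end Matrix.PosSemidef

section Single

variable {n : Type*} [Fintype n] [DecidableEq n] (M : Matrix n n ℝ) (u : n → ℝ) (i : n) (x : ℝ)

theorem dotProduct_mulVec_single :
    u ⬝ᵥ M *ᵥ Pi.single i x = x * (u ⬝ᵥ M *ᵥ Pi.single i 1) := by
  conv_lhs => rw [← mul_one x, ← smul_eq_mul, Pi.single_smul', mulVec_smul, dotProduct_smul]
  rfl

theorem single_dotProduct_mulVec_single :
    Pi.single i x ⬝ᵥ M *ᵥ Pi.single i x = x ^ 2 * M i i := by
  simp [mulVec_single]; ring

variable {M}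

theorem Matrix.IsSymm.add_single_dotProduct_mulVec_add_single (hM : M.IsSymm) :
    (u + Pi.single i x) ⬝ᵥ M *ᵥ (u + Pi.single i x) =
      u ⬝ᵥ M *ᵥ u + 2 * (x * (u ⬝ᵥ M *ᵥ Pi.single i 1)) + x ^ 2 * M i i := by
  rw [hM.add_dotProduct_mulVec_add, dotProduct_mulVec_single M u i x,
    single_dotProduct_mulVec_single]

theorem Matrix.PosSemidef.sq_mul_dotProduct_mulVec_single_le (hM : M.PosSemidef) :
    (x * (u ⬝ᵥ M *ᵥ Pi.single i 1)) ^ 2 ≤ (u ⬝ᵥ M *ᵥ u) * (x ^ 2 * M i i) := by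
  have := hM.sq_dotProduct_mulVec_le u (Pi.single i x)
  rwa [dotProduct_mulVec_single M u i x, single_dotProduct_mulVec_single] at this

end Single

theorem abs_dotProduct_mulVec_le {n : ℕ} {M : Matrix (Fin n) (Fin n) ℝ} {u v : Fin n → ℝ}
    {a b c : ℝ} (hu : ∀ j, |u j| ≤ a) (hM : ∀ j k, |M j k| ≤ c) (hv : ∀ k, |v k| ≤ b) :
    |u ⬝ᵥ M *ᵥ v| ≤ n ^ 2 * (a * c * b) := by
  have hterm : ∀ j k, |u j * (M j k * v k)| ≤ a * c * b := fun j k => by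
    rw [abs_mul, abs_mul, ← mul_assoc]
    have ha := (abs_nonneg _).trans (hu j)
    have hc := (abs_nonneg _).trans (hM j k)
    gcongr
    exacts [hu j, hM j k, hv k]
  calc |u ⬝ᵥ M *ᵥ v| = |∑ j, ∑ k, u j * (M j k * v k)| := by
        simp only [dotProduct, mulVec, Finset.mul_sum]
    _ ≤ ∑ j, ∑ k, |u j * (M j k * v k)| := (Finset.abs_sum_le_sum_abs _ _).trans
        (Finset.sum_le_sum fun j _ => Finset.abs_sum_le_sum_abs _ _)
    _ ≤ ∑ _j : Fin n, ∑ _k : Fin n, a * c * b := by gcongr with j _ k _; exact hterm j k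
    _ = n ^ 2 * (a * c * b) := by simp; ring

section Kernel

variable {X : Type*} (k : X → X → ℝ) {n : ℕ} (x : Fin n → X)

theorem sum_sum_mul_kernel_mul_eq_dotProduct_mulVec (u v : Fin n → ℝ) :
    ∑ i, ∑ j, u i * k (x i) (x j) * v j = u ⬝ᵥ (of fun i j => k (x i) (x j)) *ᵥ v := by
  simp [dotProduct, mulVec, Finset.mul_sum, mul_assoc]

variable {k}

theorem posSemidef_kernel (hk_symm : ∀ x x', k x x' = k x' x)
    (hk_posdef : ∀ (m : ℕ) (x : Fin m → X) (u : Fin m → ℝ),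
      0 ≤ ∑ i, ∑ j, u i * k (x i) (x j) * u j) :
    (of fun i j => k (x i) (x j)).PosSemidef :=
  .of_dotProduct_mulVec_nonneg (isHermitian_iff_isSymm.mpr (IsSymm.ext fun i j => hk_symm _ _))
    fun u => by simpa [sum_sum_mul_kernel_mul_eq_dotProduct_mulVec] using hk_posdef n x u

theorem abs_sqrt_sum_kernel_sub_le (hk_symm : ∀ x x', k x x' = k x' x)
    (hk_posdef : ∀ (m : ℕ) (x : Fin m → X) (u : Fin m → ℝ),
      0 ≤ ∑ i, ∑ j, u i * k (x i) (x j) * u j) (u v : Fin n → ℝ) :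
    |√(∑ i, ∑ j, u i * k (x i) (x j) * u j) - √(∑ i, ∑ j, v i * k (x i) (x j) * v j)| ≤
      √(∑ i, ∑ j, (u i - v i) * k (x i) (x j) * (u j - v j)) := by
  have := (posSemidef_kernel x hk_symm hk_posdef).abs_sqrt_sub_sqrt_le u v
  rwa [← sum_sum_mul_kernel_mul_eq_dotProduct_mulVec, ← sum_sum_mul_kernel_mul_eq_dotProduct_mulVec,
    ← sum_sum_mul_kernel_mul_eq_dotProduct_mulVec] at this

theorem abs_sqrt_inv_sq_mul_sum_kernel_sub_le (hk_symm : ∀ x x', k x x' = k x' x)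
    (hk_posdef : ∀ (m : ℕ) (x : Fin m → X) (u : Fin m → ℝ),
      0 ≤ ∑ i, ∑ j, u i * k (x i) (x j) * u j) (hn : 0 < n) (u v : Fin n → ℝ) {r : ℝ}
    (h : ∑ i, ∑ j, (u i - v i) * k (x i) (x j) * (u j - v j) ≤ n * r) :
    |√(1 / (n : ℝ) ^ 2 * ∑ i, ∑ j, u i * k (x i) (x j) * u j) -
        √(1 / (n : ℝ) ^ 2 * ∑ i, ∑ j, v i * k (x i) (x j) * v j)| ≤ √(r / n) := by
  have hn : (0 : ℝ) < n := by exact_mod_cast hn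
  rw [sqrt_mul (by positivity), sqrt_mul (by positivity), ← mul_sub, abs_mul,
    abs_of_nonneg (sqrt_nonneg _)]
  calc √(1 / (n : ℝ) ^ 2) * |_ - _|
      ≤ √(1 / (n : ℝ) ^ 2) * √(∑ i, ∑ j, (u i - v i) * k (x i) (x j) * (u j - v j)) := by
        gcongr; exact abs_sqrt_sum_kernel_sub_le x hk_symm hk_posdef u v
    _ ≤ √(1 / (n : ℝ) ^ 2) * √(n * r) := by gcongr
    _ = √(r / n) := by
        rw [← sqrt_mul (by positivity)]; congr 1; field_simp

end Kernel

def zeroFrom {n : ℕ} (m : ℕ) (u : Fin n → ℝ) : Fin n → ℝ :=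
  fun j => if (j : ℕ) < m then u j else 0

section ZeroFrom

variable {n : ℕ} (u : Fin n → ℝ)

@[simp]
theorem zeroFrom_zero : zeroFrom 0 u = 0 := by
  ext j; simp [zeroFrom]

theorem zeroFrom_of_le {m : ℕ} (h : n ≤ m) : zeroFrom m u = u := by
  ext j; simp [zeroFrom, j.isLt.trans_le h]

theorem zeroFrom_succ (i : Fin n) : zeroFrom (i + 1) u = zeroFrom i u + Pi.single i (u i) := by
  ext j
  rcases lt_trichotomy j i with h | rfl | h
  · simp [zeroFrom, h, h.ne, Nat.lt_succ_of_lt (Fin.lt_def.mp h)]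
  · simp [zeroFrom]
  · simp [zeroFrom, h.ne', not_lt.mpr (Fin.lt_def.mp h).le,
      not_lt.mpr (Nat.succ_le_of_lt (Fin.lt_def.mp h))]

theorem zeroFrom_apply_of_le {m : ℕ} {j : Fin n} (h : m ≤ j) : zeroFrom m u j = 0 := by
  simp [zeroFrom, not_lt.mpr h]

theorem abs_zeroFrom_apply_le {C : ℝ} (hu : ∀ j, |u j| ≤ C) (m : ℕ) (j : Fin n) :
    |zeroFrom m u j| ≤ C := by
  by_cases h : (j : ℕ) < m <;> simp [zeroFrom, h, hu j, (abs_nonneg _).trans (hu j)]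

theorem Matrix.IsSymm.zeroFrom_succ_dotProduct_mulVec {M : Matrix (Fin n) (Fin n) ℝ}
    (hM : M.IsSymm) (i : Fin n) :
    zeroFrom (i + 1) u ⬝ᵥ M *ᵥ zeroFrom (i + 1) u = zeroFrom i u ⬝ᵥ M *ᵥ zeroFrom i u +
      2 * (u i * (zeroFrom i u ⬝ᵥ M *ᵥ Pi.single i 1)) + u i ^ 2 * M i i := by
  rw [zeroFrom_succ, hM.add_single_dotProduct_mulVec_add_single]

end ZeroFrom

theorem measurable_zeroFrom_apply {Ω : Type*} {𝒢 : MeasurableSpace Ω} {n m : ℕ}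
    {A : Fin n → Ω → ℝ} (hA : ∀ j : Fin n, (j : ℕ) < m → Measurable[𝒢] (A j)) (j : Fin n) :
    Measurable[𝒢] fun ω => zeroFrom m (A · ω) j := by
  by_cases h : (j : ℕ) < m
  · simpa [zeroFrom, h] using hA j h
  · simp [zeroFrom, h, measurable_const]

theorem measurable_dotProduct_mulVec_of_eq_zero {Ω : Type*} {𝒢 : MeasurableSpace Ω} {n m : ℕ}
    {K : Ω → Matrix (Fin n) (Fin n) ℝ} {u v : Ω → Fin n → ℝ}
    (hK : ∀ j k : Fin n, (j : ℕ) ≤ m → (k : ℕ) ≤ m → Measurable[𝒢] fun ω => K ω j k)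
    (hu : ∀ j, Measurable[𝒢] fun ω => u ω j) (hu₀ : ∀ j : Fin n, m < j → ∀ ω, u ω j = 0)
    (hv : ∀ k, Measurable[𝒢] fun ω => v ω k) (hv₀ : ∀ k : Fin n, m < k → ∀ ω, v ω k = 0) :
    Measurable[𝒢] fun ω => u ω ⬝ᵥ K ω *ᵥ v ω := by
  simp only [dotProduct, mulVec, Finset.mul_sum]
  refine Finset.measurable_sum _ fun j _ => Finset.measurable_sum _ fun k _ => ?_
  by_cases hj : (j : ℕ) ≤ m
  · by_cases hk : (k : ℕ) ≤ m
    · exact (hu j).mul ((hK j k hj hk).mul (hv k))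
    · simp_rw [hv₀ k (not_le.mp hk), mul_zero]; exact measurable_const
  · simp_rw [hu₀ j (not_le.mp hj), zero_mul]; exact measurable_const

theorem integral_mul_eq_zero_of_condExp_eq_zero {Ω : Type*} {m m₀ : MeasurableSpace Ω}
    {μ : Measure Ω} [IsFiniteMeasure μ] (hm : m ≤ m₀) {f g : Ω → ℝ}
    (hf : StronglyMeasurable[m] f) (hg : Integrable g μ) (hfg : Integrable (f * g) μ)
    (hg₀ : μ[g | m] =ᵐ[μ] 0) : ∫ ω, f ω * g ω ∂μ = 0 := calc
  ∫ ω, f ω * g ω ∂μ = ∫ ω, μ[f * g | m] ω ∂μ := (integral_condExp hm).symm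
  _ = ∫ ω, (f * μ[g | m]) ω ∂μ :=
      integral_congr_ae (condExp_mul_of_stronglyMeasurable_left hf hfg hg)
  _ = ∫ _, 0 ∂μ := integral_congr_ae (hg₀.mono fun ω hω => by simp [hω])
  _ = 0 := integral_zero _ _

theorem condExp_sub_ae_eq_zero {Ω : Type*} {m m₀ : MeasurableSpace Ω} {μ : Measure Ω}
    [IsFiniteMeasure μ] (hm : m ≤ m₀) {f g : Ω → ℝ} (hf : Integrable f μ)
    (hg : StronglyMeasurable[m] g) (hg_int : Integrable g μ) (hfg : μ[f | m] =ᵐ[μ] g) :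
    μ[f - g | m] =ᵐ[μ] 0 := by
  filter_upwards [condExp_sub hf hg_int m, hfg] with ω h₁ h₂
  rw [h₁, Pi.sub_apply, h₂, condExp_of_stronglyMeasurable hm hg hg_int, sub_self, Pi.zero_apply]

theorem integrable_cosh_mul_sqrt {Ω : Type*} [MeasurableSpace Ω] {P : Measure Ω}
    [IsFiniteMeasure P] (l : ℝ) {Q : Ω → ℝ} (hQ : Measurable Q) {C : ℝ}
    (hQ_bdd : ∀ ω, Q ω ≤ C) : Integrable (fun ω => cosh (l * √(Q ω))) P :=
  .of_bound (by fun_prop) (cosh (l * √C)) (ae_of_all _ fun ω => by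
    rw [Real.norm_eq_abs, abs_of_pos (cosh_pos _)]
    exact cosh_mul_sqrt_le_cosh_mul_sqrt l (hQ_bdd ω))

theorem integral_cosh_mul_sqrt_le {Ω : Type*} {𝒢 m₀ : MeasurableSpace Ω} {P : Measure Ω}
    [IsProbabilityMeasure P] (h𝒢 : 𝒢 ≤ m₀) {Q Q' A H : Ω → ℝ}
    {β : ℝ} (hβ : 0 < β) (l : ℝ) (hQ : Measurable[𝒢] Q) (hH : Measurable[𝒢] H)
    (hQ_nonneg : ∀ ω, 0 ≤ Q ω) (hQ_bdd : ∃ C, ∀ ω, Q ω ≤ C) (hH_bdd : ∃ C, ∀ ω, |H ω| ≤ C)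
    (hA : Integrable A P) (hA₀ : P[A | 𝒢] =ᵐ[P] 0)
    (hQ' : Integrable (fun ω => cosh (l * √(Q' ω))) P)
    (hAH : ∀ᵐ ω ∂P, (A ω * H ω) ^ 2 ≤ Q ω * β ^ 2)
    (hQ'_le : ∀ᵐ ω ∂P, Q' ω ≤ Q ω + 2 * (A ω * H ω) + β ^ 2) :
    ∫ ω, cosh (l * √(Q' ω)) ∂P ≤ cosh (l * β) * ∫ ω, cosh (l * √(Q ω)) ∂P := by
  obtain ⟨CQ, hCQ⟩ := hQ_bdd
  obtain ⟨CH, hCH⟩ := hH_bdd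
  set V : Ω → ℝ := fun ω => H ω * (sinh (l * √(Q ω)) / √(Q ω) * (sinh (l * β) / β))
  have hV : Measurable[𝒢] V := by fun_prop
  have hcosh_le : ∀ ω, cosh (l * √(Q ω)) ≤ cosh (l * √CQ) := fun ω =>
    cosh_mul_sqrt_le_cosh_mul_sqrt l (hCQ ω)
  have hV_bdd : ∀ ω, ‖V ω‖ ≤ CH * (|l| * cosh (l * √CQ) * |sinh (l * β) / β|) := fun ω => by
    rw [Real.norm_eq_abs, abs_mul, abs_mul]
    gcongr
    · exact (abs_nonneg _).trans (hCH ω)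
    · exact hCH ω
    · exact (abs_sinh_mul_div_le l _).trans (by gcongr; exact hcosh_le ω)
  have hcosh_int := integrable_cosh_mul_sqrt (P := P) l (hQ.mono h𝒢 le_rfl) hCQ
  have hVA : Integrable (fun ω => V ω * A ω) P :=
    hA.bdd_mul (hV.mono h𝒢 le_rfl).aestronglyMeasurable (ae_of_all _ hV_bdd)
  have horth : ∫ ω, V ω * A ω ∂P = 0 :=
    integral_mul_eq_zero_of_condExp_eq_zero h𝒢 hV.stronglyMeasurable hA hVA hA₀
  calc ∫ ω, cosh (l * √(Q' ω)) ∂P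
      ≤ ∫ ω, cosh (l * √(Q ω)) * cosh (l * β) + V ω * A ω ∂P := by
        refine integral_mono_ae hQ' ((hcosh_int.mul_const _).add hVA) ?_
        filter_upwards [hAH, hQ'_le] with ω hAHω hQ'ω
        refine (cosh_mul_sqrt_le_of_sq_le (hQ_nonneg ω) hβ hAHω hQ'ω).trans_eq ?_
        simp only [V]; ring
    _ = cosh (l * β) * ∫ ω, cosh (l * √(Q ω)) ∂P := by
        rw [integral_add (hcosh_int.mul_const _) hVA, integral_mul_const, horth]; ring

theorem integral_cosh_mul_sqrt_zeroFrom_succ_le {Ω : Type*} {𝒢 m₀ : MeasurableSpace Ω}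
    {P : Measure Ω} [IsProbabilityMeasure P] (h𝒢 : 𝒢 ≤ m₀) {n : ℕ}
    {K : Ω → Matrix (Fin n) (Fin n) ℝ} (hK : ∀ ω, (K ω).PosSemidef)
    (hK_bdd : ∃ C, ∀ ω j k, |K ω j k| ≤ C) {A : Fin n → Ω → ℝ}
    (hA_bdd : ∃ C, ∀ j ω, |A j ω| ≤ C) {i : Fin n}
    (hK_meas : ∀ j k : Fin n, j ≤ i → k ≤ i → Measurable[𝒢] fun ω => K ω j k)
    (hA_meas : ∀ j < i, Measurable[𝒢] (A j)) (hA : Measurable (A i)) (hA₀ : P[A i | 𝒢] =ᵐ[P] 0)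
    {β : ℝ} (hβ : 0 < β) (hAK : ∀ᵐ ω ∂P, A i ω ^ 2 * K ω i i ≤ β ^ 2) (l : ℝ) :
    ∫ ω, cosh (l * √(zeroFrom (i + 1) (A · ω) ⬝ᵥ K ω *ᵥ zeroFrom (i + 1) (A · ω))) ∂P ≤
      cosh (l * β) * ∫ ω, cosh (l * √(zeroFrom i (A · ω) ⬝ᵥ K ω *ᵥ zeroFrom i (A · ω))) ∂P := by
  obtain ⟨CK, hCK⟩ := hK_bdd
  obtain ⟨CA, hCA⟩ := hA_bdd
  have hW : ∀ j, Measurable[𝒢] fun ω => zeroFrom i (A · ω) j := measurable_zeroFrom_apply hA_meas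
  have hW₀ : ∀ j : Fin n, i < j → ∀ ω, zeroFrom i (A · ω) j = 0 := fun j hj ω =>
    zeroFrom_apply_of_le _ (Fin.lt_def.mp hj).le
  have hW' : ∀ j, Measurable fun ω => zeroFrom (i + 1) (A · ω) j :=
    measurable_zeroFrom_apply fun j hj => (Nat.lt_succ_iff_lt_or_eq.mp hj).elim
      (fun h => (hA_meas j h).mono h𝒢 le_rfl) (fun h => Fin.ext h ▸ hA)
  have hQ' : Measurable fun ω => zeroFrom (i + 1) (A · ω) ⬝ᵥ K ω *ᵥ zeroFrom (i + 1) (A · ω) :=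
    measurable_dotProduct_mulVec_of_eq_zero (fun j k hj hk => (hK_meas j k hj hk).mono h𝒢 le_rfl)
      hW' (fun j hj ω => zeroFrom_apply_of_le _ hj) hW' (fun j hj ω => zeroFrom_apply_of_le _ hj)
  have hQ_bdd : ∀ (m : ℕ) ω, zeroFrom m (A · ω) ⬝ᵥ K ω *ᵥ zeroFrom m (A · ω) ≤
      n ^ 2 * (CA * CK * CA) := fun m ω => (le_abs_self _).trans <| abs_dotProduct_mulVec_le
    (abs_zeroFrom_apply_le _ (hCA · ω) m) (hCK ω) (abs_zeroFrom_apply_le _ (hCA · ω) m)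
  have hH : Measurable[𝒢] fun ω => zeroFrom i (A · ω) ⬝ᵥ K ω *ᵥ Pi.single i 1 :=
    measurable_dotProduct_mulVec_of_eq_zero hK_meas hW hW₀ (fun _ => measurable_const)
      fun j hj ω => by simp [(Fin.lt_def.mpr hj).ne']
  have hH_bdd : ∀ ω, |zeroFrom i (A · ω) ⬝ᵥ K ω *ᵥ Pi.single i 1| ≤ n ^ 2 * (CA * CK * 1) :=
    fun ω => abs_dotProduct_mulVec_le (abs_zeroFrom_apply_le _ (hCA · ω) i) (hCK ω) fun k => by
      by_cases h : k = i <;> simp [h]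
  refine integral_cosh_mul_sqrt_le h𝒢 hβ l
    (measurable_dotProduct_mulVec_of_eq_zero hK_meas hW hW₀ hW hW₀) hH
    (fun ω => (hK ω).dotProduct_mulVec_self_nonneg _) ⟨_, hQ_bdd i⟩ ⟨_, hH_bdd⟩
    (.of_bound hA.aestronglyMeasurable CA (ae_of_all _ (hCA i))) hA₀
    (integrable_cosh_mul_sqrt l hQ' (hQ_bdd _)) ?_ ?_
  · filter_upwards [hAK] with ω hω
    refine ((hK ω).sq_mul_dotProduct_mulVec_single_le _ i (A i ω)).trans ?_
    exact mul_le_mul_of_nonneg_left hω ((hK ω).dotProduct_mulVec_self_nonneg _)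
  · filter_upwards [hAK] with ω hω
    rw [(isHermitian_iff_isSymm.mp (hK ω).isHermitian).zeroFrom_succ_dotProduct_mulVec]
    linarith

section Probability

variable {Ω : Type*} [m₀ : MeasurableSpace Ω] {P : Measure Ω} [IsProbabilityMeasure P]

theorem integral_cosh_mul_sqrt_dotProduct_mulVec_le {n : ℕ} {𝒢 : Fin n → MeasurableSpace Ω}
    (h𝒢 : ∀ i, 𝒢 i ≤ m₀) {K : Ω → Matrix (Fin n) (Fin n) ℝ} (hK : ∀ ω, (K ω).PosSemidef)
    (hK_bdd : ∃ C, ∀ ω j k, |K ω j k| ≤ C) {A : Fin n → Ω → ℝ} (hA_bdd : ∃ C, ∀ i ω, |A i ω| ≤ C)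
    (hK_meas : ∀ i j k : Fin n, j ≤ i → k ≤ i → Measurable[𝒢 i] fun ω => K ω j k)
    (hA_meas : ∀ i, ∀ j < i, Measurable[𝒢 i] (A j)) (hA : ∀ i, Measurable (A i))
    (hA₀ : ∀ i, P[A i | 𝒢 i] =ᵐ[P] 0) {β : ℝ} (hβ : 0 < β)
    (hAK : ∀ i, ∀ᵐ ω ∂P, A i ω ^ 2 * K ω i i ≤ β ^ 2) (l : ℝ) :
    ∫ ω, cosh (l * √((A · ω) ⬝ᵥ K ω *ᵥ (A · ω))) ∂P ≤ cosh (l * β) ^ n := by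
  have key : ∀ m ≤ n,
      ∫ ω, cosh (l * √(zeroFrom m (A · ω) ⬝ᵥ K ω *ᵥ zeroFrom m (A · ω))) ∂P ≤
        cosh (l * β) ^ m := by
    intro m hm
    induction m with
    | zero => simp
    | succ m ih =>
      calc _ ≤ cosh (l * β) * cosh (l * β) ^ m := by
            refine (integral_cosh_mul_sqrt_zeroFrom_succ_le (i := ⟨m, hm⟩) (h𝒢 _) hK hK_bdd
              hA_bdd (hK_meas _) (hA_meas _) (hA _) (hA₀ _) hβ (hAK _) l).trans ?_
            gcongr
            exact ih (by omega)
        _ = cosh (l * β) ^ (m + 1) := (pow_succ' _ _).symm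
  simpa only [zeroFrom_of_le _ le_rfl] using key n le_rfl

theorem measureReal_ge_le_two_mul_exp_of_integral_cosh_le {N : Ω → ℝ} {v : ℝ} (hv : 0 < v)
    (hint : ∀ l, Integrable (fun ω => cosh (l * N ω)) P)
    (hmgf : ∀ l, ∫ ω, cosh (l * N ω) ∂P ≤ exp (v * l ^ 2 / 2)) {T : ℝ} (hT : 0 ≤ T) :
    P.real {ω | T ≤ N ω} ≤ 2 * exp (-T ^ 2 / (2 * v)) := by
  set l := T / v
  have hl : 0 ≤ l := by positivity
  have hmarkov := mul_meas_ge_le_integral_of_nonneg (ae_of_all _ fun ω => (cosh_pos _).le)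
    (hint l) (cosh (l * T))
  have hsub : {ω | T ≤ N ω} ⊆ {ω | cosh (l * T) ≤ cosh (l * N ω)} := fun ω (hω : T ≤ N ω) => by
    rw [Set.mem_ofPred_eq, cosh_le_cosh, abs_of_nonneg (by positivity),
      abs_of_nonneg (mul_nonneg hl (hT.trans hω))]
    gcongr
  have hcosh : exp (l * T) / 2 ≤ cosh (l * T) := by
    rw [cosh_eq]; gcongr; linarith [exp_pos (-(l * T))]
  have hexp : exp (v * l ^ 2 / 2) = exp (l * T) * exp (-T ^ 2 / (2 * v)) := by
    rw [← exp_add]; congr 1; simp only [l]; field_simp; ring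
  calc P.real {ω | T ≤ N ω}
      ≤ P.real {ω | cosh (l * T) ≤ cosh (l * N ω)} := measureReal_mono hsub
    _ ≤ exp (v * l ^ 2 / 2) / cosh (l * T) := by
        rw [le_div_iff₀ (cosh_pos _), mul_comm]; exact hmarkov.trans (hmgf l)
    _ ≤ exp (v * l ^ 2 / 2) / (exp (l * T) / 2) := by gcongr
    _ = 2 * exp (-T ^ 2 / (2 * v)) := by rw [hexp]; field_simp

theorem measureReal_sum_sum_kernel_ge_le {X : Type*} [MeasurableSpace X]
    {k : X → X → ℝ} (hk_meas : Measurable fun p : X × X => k p.1 p.2)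
    (hk_bdd : ∃ C, ∀ x x', |k x x'| ≤ C) (hk_symm : ∀ x x', k x x' = k x' x)
    (hk_posdef : ∀ (m : ℕ) (x : Fin m → X) (u : Fin m → ℝ),
      0 ≤ ∑ i, ∑ j, u i * k (x i) (x j) * u j)
    {n : ℕ} (hn : 0 < n) (𝒢 : Fin n → MeasurableSpace Ω) (h𝒢 : ∀ i, 𝒢 i ≤ m₀)
    (Xs : Fin n → Ω → X) (hXs : ∀ i j : Fin n, j ≤ i → Measurable[𝒢 i] (Xs j))
    (A : Fin n → Ω → ℝ) (hA : ∀ i, Measurable (A i))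
    (hA_meas : ∀ i j : Fin n, j < i → Measurable[𝒢 i] (A j)) (hA_bdd : ∃ C, ∀ i ω, |A i ω| ≤ C)
    (hA₀ : ∀ i, P[A i | 𝒢 i] =ᵐ[P] 0) {c : ℝ} (hc : 0 < c)
    (hAk : ∀ i, ∀ᵐ ω ∂P, A i ω ^ 2 * k (Xs i ω) (Xs i ω) ≤ c) {L : ℝ} (hL : 0 ≤ L) :
    P.real {ω | 2 * n * c * L ≤ ∑ i, ∑ j, A i ω * k (Xs i ω) (Xs j ω) * A j ω} ≤
      2 * exp (-L) := by
  obtain ⟨Ck, hCk⟩ := hk_bdd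
  obtain ⟨CA, hCA⟩ := hA_bdd
  set K : Ω → Matrix (Fin n) (Fin n) ℝ := fun ω => of fun i j => k (Xs i ω) (Xs j ω)
  set D : Ω → ℝ := fun ω => (A · ω) ⬝ᵥ K ω *ᵥ (A · ω)
  have hK : ∀ ω, (K ω).PosSemidef := fun ω => posSemidef_kernel _ hk_symm hk_posdef
  have hK_meas : ∀ i j j' : Fin n, j ≤ i → j' ≤ i → Measurable[𝒢 i] fun ω => K ω j j' :=
    fun i j j' hj hj' => hk_meas.comp ((hXs i j hj).prodMk (hXs i j' hj'))
  have hD_meas : Measurable D := by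
    have hK' : ∀ j j', Measurable fun ω => K ω j j' := fun j j' =>
      (hK_meas _ j j' (le_max_left j j') (le_max_right j j')).mono (h𝒢 _) le_rfl
    simp only [D, dotProduct, mulVec]
    fun_prop
  have hD_bdd : ∀ ω, D ω ≤ n ^ 2 * (CA * Ck * CA) := fun ω => (le_abs_self _).trans
    (abs_dotProduct_mulVec_le (hCA · ω) (fun _ _ => hCk _ _) (hCA · ω))
  have hmgf : ∀ l, ∫ ω, cosh (l * √(D ω)) ∂P ≤ exp (n * c * l ^ 2 / 2) := fun l => calc
    _ ≤ cosh (l * √c) ^ n := integral_cosh_mul_sqrt_dotProduct_mulVec_le h𝒢 hK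
        ⟨Ck, fun _ _ _ => hCk _ _⟩ ⟨CA, hCA⟩ hK_meas hA_meas hA hA₀ (sqrt_pos.mpr hc)
        (by simpa [K, sq_sqrt hc.le] using hAk) l
    _ ≤ exp ((l * √c) ^ 2 / 2) ^ n := by gcongr; exact cosh_le_exp_half_sq _
    _ = exp (n * c * l ^ 2 / 2) := by rw [← exp_nat_mul, mul_pow, sq_sqrt hc.le]; ring_nf
  calc P.real {ω | 2 * n * c * L ≤ ∑ i, ∑ j, A i ω * k (Xs i ω) (Xs j ω) * A j ω}
      = P.real {ω | √(2 * n * c * L) ≤ √(D ω)} := by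
        congr 1; ext ω
        rw [mem_ofPred_eq, mem_ofPred_eq, sum_sum_mul_kernel_mul_eq_dotProduct_mulVec,
          sqrt_le_sqrt_iff ((hK ω).dotProduct_mulVec_self_nonneg _)]
    _ ≤ 2 * exp (-√(2 * n * c * L) ^ 2 / (2 * (n * c))) :=
        measureReal_ge_le_two_mul_exp_of_integral_cosh_le (by positivity)
          (fun l => integrable_cosh_mul_sqrt l hD_meas hD_bdd) hmgf (sqrt_nonneg _)
    _ = 2 * exp (-L) := by
        have : (0 : ℝ) < n := by exact_mod_cast hn
        rw [sq_sqrt (by positivity)]; congr 2; field_simp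

theorem ofReal_one_sub_le_prob_compl {s : Set Ω} {δ : ℝ} (h : P.real s ≤ δ) :
    ENNReal.ofReal (1 - δ) ≤ P sᶜ := by
  have hδ : 0 ≤ δ := measureReal_nonneg.trans h
  have hs : P s ≤ ENNReal.ofReal δ := by rw [← ofReal_measureReal]; exact ENNReal.ofReal_le_ofReal h
  rw [ENNReal.ofReal_sub _ hδ, ENNReal.ofReal_one, tsub_le_iff_left, ← measure_univ (μ := P)]
  exact (measure_univ_le_add_compl s).trans (by gcongr)

end Probability

theorem stmt_0_general
    {X : Type*} [MeasurableSpace X]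
    (k : X → X → ℝ)
    (hk_meas : Measurable (fun p : X × X => k p.1 p.2))
    (hk_bdd : ∃ Ck : ℝ, ∀ x x' : X, |k x x'| ≤ Ck)
    (hk_symm : ∀ x x' : X, k x x' = k x' x)
    (hk_posdef : ∀ (m : ℕ) (x : Fin m → X) (u : Fin m → ℝ),
      0 ≤ ∑ i, ∑ j, u i * k (x i) (x j) * u j)
    (γ : ℝ)
    (q g : X → ℝ)
    (hq_meas : Measurable q)
    (hg_meas : Measurable g) (hg_bdd : ∃ C : ℝ, ∀ x, |g x| ≤ C)
    (n : ℕ) (hn : 1 ≤ n)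
    {Ω : Type*} [MeasurableSpace Ω] (P : Measure Ω) [IsProbabilityMeasure P]
    (Xs Xs' : Fin n → Ω → X) (Rs : Fin n → Ω → ℝ)
    (hXs : ∀ i, Measurable (Xs i)) (hXs' : ∀ i, Measurable (Xs' i))
    (hRs : ∀ i, Measurable (Rs i))
    (hB_bdd : ∃ C : ℝ, ∀ i ω, |q (Xs i ω) - γ * q (Xs' i ω) - Rs i ω| ≤ C)
    (𝒢 : Fin n → MeasurableSpace Ω)
    (h𝒢 : ∀ i : Fin n, 𝒢 i =
      (⨆ (j : Fin n) (_ : (j : ℕ) < (i : ℕ)),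
        MeasurableSpace.comap (fun ω => (Xs j ω, Xs' j ω, Rs j ω)) inferInstance)
      ⊔ MeasurableSpace.comap (Xs i) inferInstance)
    (hcond : ∀ i : Fin n,
      P[(fun ω => q (Xs i ω) - γ * q (Xs' i ω) - Rs i ω) | 𝒢 i]
        =ᵐ[P] fun ω => g (Xs i ω))
    (c : ℝ) (hc : 0 < c)
    (hcb : ∀ i : Fin n, ∀ᵐ ω ∂P,
      (q (Xs i ω) - γ * q (Xs' i ω) - Rs i ω - g (Xs i ω)) ^ 2 * k (Xs i ω) (Xs i ω) ≤ c)
    (δ : ℝ) (hδ : δ ∈ Set.Ioo (0 : ℝ) 1) :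
    ENNReal.ofReal (1 - δ) ≤
      P {ω | |Real.sqrt ((1 / (n : ℝ) ^ 2) * ∑ i : Fin n, ∑ j : Fin n,
            (q (Xs i ω) - γ * q (Xs' i ω) - Rs i ω) * k (Xs i ω) (Xs j ω) *
              (q (Xs j ω) - γ * q (Xs' j ω) - Rs j ω))
          - Real.sqrt ((1 / (n : ℝ) ^ 2) * ∑ i : Fin n, ∑ j : Fin n,
            g (Xs i ω) * k (Xs i ω) (Xs j ω) * g (Xs j ω))|
          ≤ Real.sqrt (2 * c * Real.log (2 / δ) / n)}
    ∧ (g = 0 →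
      ENNReal.ofReal (1 - δ) ≤
        P {ω | Real.sqrt ((1 / (n : ℝ) ^ 2) * ∑ i : Fin n, ∑ j : Fin n,
              (q (Xs i ω) - γ * q (Xs' i ω) - Rs i ω) * k (Xs i ω) (Xs j ω) *
                (q (Xs j ω) - γ * q (Xs' j ω) - Rs j ω))
            ≤ Real.sqrt (2 * c * Real.log (2 / δ) / n)}) := by
  obtain ⟨hδ₀, hδ₁⟩ := hδ
  obtain ⟨CB, hCB⟩ := hB_bdd
  obtain ⟨Cg, hCg⟩ := hg_bdd
  have hpast : ∀ i j : Fin n, j < i → Measurable[𝒢 i] fun ω => (Xs j ω, Xs' j ω, Rs j ω) :=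
    fun i j hj => measurable_iff_comap_le.mpr
      (h𝒢 i ▸ le_sup_of_le_left (le_iSup₂_of_le j hj le_rfl))
  have hXs_𝒢 : ∀ i, Measurable[𝒢 i] (Xs i) :=
    fun i => measurable_iff_comap_le.mpr (h𝒢 i ▸ le_sup_right)
  have h𝒢_le : ∀ i, 𝒢 i ≤ ‹MeasurableSpace Ω› := fun i => h𝒢 i ▸ sup_le
    (iSup₂_le fun j _ => ((hXs j).prodMk ((hXs' j).prodMk (hRs j))).comap_le) (hXs i).comap_le
  set A : Fin n → Ω → ℝ := fun i ω => q (Xs i ω) - γ * q (Xs' i ω) - Rs i ω - g (Xs i ω)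
  have hA_past : ∀ i j : Fin n, j < i → Measurable[𝒢 i] (A j) := fun i j hj =>
    (show Measurable fun p : X × X × ℝ => q p.1 - γ * q p.2.1 - p.2.2 - g p.1 by fun_prop).comp
      (hpast i j hj)
  have hA₀ : ∀ i, P[A i | 𝒢 i] =ᵐ[P] 0 := fun i => condExp_sub_ae_eq_zero (h𝒢_le i)
    (.of_bound (by fun_prop) CB (ae_of_all _ (hCB i))) (hg_meas.comp (hXs_𝒢 i)).stronglyMeasurable
    (.of_bound (hg_meas.comp (hXs i)).aestronglyMeasurable Cg (ae_of_all _ fun ω => hCg _))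
    (hcond i)
  have htail := measureReal_sum_sum_kernel_ge_le hk_meas hk_bdd hk_symm hk_posdef hn 𝒢 h𝒢_le
    Xs (fun i j hj => hj.lt_or_eq.elim (fun h => measurable_fst.comp (hpast i j h)) (· ▸ hXs_𝒢 i))
    A (fun i => by fun_prop) hA_past
    ⟨CB + Cg, fun i ω => (abs_sub _ _).trans (add_le_add (hCB i ω) (hCg _))⟩
    hA₀ hc hcb (L := log (2 / δ)) (log_nonneg ((one_le_div hδ₀).mpr (by linarith)))
  rw [Real.exp_neg, exp_log (by positivity), inv_div, mul_div_cancel₀ _ two_ne_zero] at htail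
  have hgood := ofReal_one_sub_le_prob_compl htail
  simp only [compl_ofPred, not_le] at hgood
  have hsub : ∀ ω, ∑ i, ∑ j, A i ω * k (Xs i ω) (Xs j ω) * A j ω < 2 * n * c * log (2 / δ) → _ :=
    fun ω hω => abs_sqrt_inv_sq_mul_sum_kernel_sub_le (Xs · ω) hk_symm hk_posdef hn
      (fun i => q (Xs i ω) - γ * q (Xs' i ω) - Rs i ω) (g <| Xs · ω)
      (r := 2 * c * log (2 / δ)) (by linarith)
  refine ⟨hgood.trans (measure_mono fun ω => hsub ω),
    fun hg => hgood.trans (measure_mono fun ω hω => ?_)⟩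
  subst hg
  simpa [abs_of_nonneg (sqrt_nonneg _)] using hsub ω hω

/-- Concentration inequality for the kernel Bellman loss (Theorem 4.1 / `thm:Lqpimain2`).
`Xs i, Xs' i, Rs i` are the transition data, `𝒢 i` is the σ-algebra generated by the
first `i - 1` transition tuples together with `Xs i`, and the conditional expectation of the
empirical Bellman residual `q (Xs i) - γ * q (Xs' i) - Rs i` given `𝒢 i` is `g (Xs i)`
(in the paper `g = R⋆q`, the expected Bellman residual, and `g = 0` when `q = q⋆`). -/
theorem stmt_0
    {X : Type*} [MeasurableSpace X]
    (k : X → X → ℝ)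
    (hk_meas : Measurable (fun p : X × X => k p.1 p.2))
    (hk_bdd : ∃ Ck : ℝ, ∀ x x' : X, |k x x'| ≤ Ck)
    (hk_symm : ∀ x x' : X, k x x' = k x' x)
    (hk_posdef : ∀ (m : ℕ) (x : Fin m → X) (u : Fin m → ℝ),
      0 ≤ ∑ i, ∑ j, u i * k (x i) (x j) * u j)
    (γ : ℝ) (hγ : γ ∈ Set.Ioo (0 : ℝ) 1)
    (q g : X → ℝ)
    (hq_meas : Measurable q) (hq_bdd : ∃ C : ℝ, ∀ x, |q x| ≤ C)
    (hg_meas : Measurable g) (hg_bdd : ∃ C : ℝ, ∀ x, |g x| ≤ C)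
    (n : ℕ) (hn : 1 ≤ n)
    {Ω : Type*} [MeasurableSpace Ω] (P : Measure Ω) [IsProbabilityMeasure P]
    (Xs Xs' : Fin n → Ω → X) (Rs : Fin n → Ω → ℝ)
    (hXs : ∀ i, Measurable (Xs i)) (hXs' : ∀ i, Measurable (Xs' i))
    (hRs : ∀ i, Measurable (Rs i))
    (hB_bdd : ∃ C : ℝ, ∀ i ω, |q (Xs i ω) - γ * q (Xs' i ω) - Rs i ω| ≤ C)
    (𝒢 : Fin n → MeasurableSpace Ω)
    (h𝒢 : ∀ i : Fin n, 𝒢 i =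
      (⨆ (j : Fin n) (_ : (j : ℕ) < (i : ℕ)),
        MeasurableSpace.comap (fun ω => (Xs j ω, Xs' j ω, Rs j ω)) inferInstance)
      ⊔ MeasurableSpace.comap (Xs i) inferInstance)
    (hcond : ∀ i : Fin n,
      P[(fun ω => q (Xs i ω) - γ * q (Xs' i ω) - Rs i ω) | 𝒢 i]
        =ᵐ[P] fun ω => g (Xs i ω))
    (c : ℝ) (hc : 0 < c)
    (hcb : ∀ i : Fin n, ∀ᵐ ω ∂P,
      (q (Xs i ω) - γ * q (Xs' i ω) - Rs i ω - g (Xs i ω)) ^ 2 * k (Xs i ω) (Xs i ω) ≤ c)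
    (δ : ℝ) (hδ : δ ∈ Set.Ioo (0 : ℝ) 1) :
    ENNReal.ofReal (1 - δ) ≤
      P {ω | |Real.sqrt ((1 / (n : ℝ) ^ 2) * ∑ i : Fin n, ∑ j : Fin n,
            (q (Xs i ω) - γ * q (Xs' i ω) - Rs i ω) * k (Xs i ω) (Xs j ω) *
              (q (Xs j ω) - γ * q (Xs' j ω) - Rs j ω))
          - Real.sqrt ((1 / (n : ℝ) ^ 2) * ∑ i : Fin n, ∑ j : Fin n,
            g (Xs i ω) * k (Xs i ω) (Xs j ω) * g (Xs j ω))|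
          ≤ Real.sqrt (2 * c * Real.log (2 / δ) / n)}
    ∧ (g = 0 →
      ENNReal.ofReal (1 - δ) ≤
        P {ω | Real.sqrt ((1 / (n : ℝ) ^ 2) * ∑ i : Fin n, ∑ j : Fin n,
              (q (Xs i ω) - γ * q (Xs' i ω) - Rs i ω) * k (Xs i ω) (Xs j ω) *
                (q (Xs j ω) - γ * q (Xs' j ω) - Rs j ω))
            ≤ Real.sqrt (2 * c * Real.log (2 / δ) / n)}) :=
  stmt_0_general k hk_meas hk_bdd hk_symm hk_posdef γ q g hq_meas hg_meas hg_bdd n hn P Xs Xs' Rs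
    hXs hXs' hRs hB_bdd 𝒢 h𝒢 hcond c hc hcb δ hδ
end

section
/- Let X be a set, γ ∈ (0,1), μ0 a probability measure on X, D_n = (x_i, x'_i, r_i)_{i=1}^n ∈ (X × X × ℝ)^n a dataset, Q a set of μ0-integrable functions X → ℝ, and ε ≥ 0. Let H be a real normed vector space together with a linear map T : H → (X → ℝ), and let W := { Tω : ω ∈ H, ‖ω‖_H ≤ 1 }. Define, in the extended reals, L_W(q; D_n) := sup_{ω ∈ H, ‖ω‖_H ≤ 1} (1/n) Σ_{i=1}^n (Tω)(x_i)·B̂q(x_i, x'_i, r_i), Ĵ⁺_{Q,W} := sup { ∫ q dμ0 : q ∈ Q, L_W(q; D_n) ≤ ε }, Ĵ⁻_{Q,W} := inf { ∫ q dμ0 : q ∈ Q, L_W(q; D_n) ≤ ε }, I_Q(Tω; D_n) := sup_{q ∈ Q} { (1/n) Σ_i (Tω)(x_i)·(γ·q(x'_i) − q(x_i)) + ∫ q dμ0 }, F⁺(ω) := (1/n) Σ_i r_i·(Tω)(x_i) + I_Q(Tω; D_n) + ε·‖ω‖_H, and F⁻(ω) := (1/n) Σ_i r_i·(Tω)(x_i)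 − I_{−Q}(Tω; D_n) − ε·‖ω‖_H, where −Q := { −q : q ∈ Q }. Then for all ω₊, ω₋ ∈ H: Ĵ⁺_{Q,W} ≤ F⁺(ω₊) and F⁻(ω₋) ≤ Ĵ⁻_{Q,W}; i.e., the interval [Ĵ⁻_{Q,W}, Ĵ⁺_{Q,W}] is contained in [F⁻(ω₋), F⁺(ω₊)]. -/
open MeasureTheory

/-- The dual confidence bound (Theorem `thm:main`, weak-duality part): for any `ω₊, ω₋` in the
normed space `H` (whose unit ball realizes the critic class `W` through the linear map `T`),
the empirical primal interval `[Ĵ⁻_{Q,W}, Ĵ⁺_{Q,W}]` is contained in `[F⁻(ω₋), F⁺(ω₊)]`. -/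
theorem stmt_5
    {X : Type*} [MeasurableSpace X]
    (γ : ℝ) (hγ : γ ∈ Set.Ioo (0 : ℝ) 1)
    (μ0 : Measure X) [IsProbabilityMeasure μ0]
    (n : ℕ) (hn : 0 < n)
    (x x' : Fin n → X) (r : Fin n → ℝ)
    (Q : Set (X → ℝ)) (hQint : ∀ q ∈ Q, Integrable q μ0)
    (ε : ℝ) (hε : 0 ≤ ε)
    {H : Type*} [NormedAddCommGroup H] [NormedSpace ℝ H]
    (T : H →ₗ[ℝ] (X → ℝ))
    (ωp ωm : H) :
    -- upper bound : Ĵ⁺_{Q,W} ≤ F⁺(ω₊)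
    ((⨆ (q : X → ℝ) (_ : q ∈ Q)
        (_ : (⨆ (w : H) (_ : ‖w‖ ≤ 1),
            (((1 / (n : ℝ)) * ∑ i, T w (x i) * (q (x i) - γ * q (x' i) - r i) : ℝ) : EReal))
          ≤ (ε : EReal)),
        ((∫ a, q a ∂μ0 : ℝ) : EReal))
      ≤ (((1 / (n : ℝ)) * ∑ i, r i * T ωp (x i) : ℝ) : EReal)
        + (⨆ (q : X → ℝ) (_ : q ∈ Q),
            (((1 / (n : ℝ)) * ∑ i, T ωp (x i) * (γ * q (x' i) - q (x i))
              + ∫ a, q a ∂μ0 : ℝ) : EReal))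
        + ((ε * ‖ωp‖ : ℝ) : EReal))
    -- lower bound : F⁻(ω₋) ≤ Ĵ⁻_{Q,W}
    ∧ ((((1 / (n : ℝ)) * ∑ i, r i * T ωm (x i) : ℝ) : EReal)
        - (⨆ (q : X → ℝ) (_ : -q ∈ Q),
            (((1 / (n : ℝ)) * ∑ i, T ωm (x i) * (γ * q (x' i) - q (x i))
              + ∫ a, q a ∂μ0 : ℝ) : EReal))
        - ((ε * ‖ωm‖ : ℝ) : EReal)
      ≤ ⨅ (q : X → ℝ) (_ : q ∈ Q)
          (_ : (⨆ (w : H) (_ : ‖w‖ ≤ 1),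
              (((1 / (n : ℝ)) * ∑ i, T w (x i) * (q (x i) - γ * q (x' i) - r i) : ℝ) : EReal))
            ≤ (ε : EReal)),
          ((∫ a, q a ∂μ0 : ℝ) : EReal)) := by

  classical
  -- key : feasibility gives a bound along any direction v
  have key : ∀ (v : H) (q : X → ℝ),
      (⨆ (w : H) (_ : ‖w‖ ≤ 1),
          (((1 / (n : ℝ)) * ∑ i, T w (x i) * (q (x i) - γ * q (x' i) - r i) : ℝ) : EReal))
        ≤ (ε : EReal) →
      (1 / (n : ℝ)) * ∑ i, T v (x i) * (q (x i) - γ * q (x' i) - r i) ≤ ε * ‖v‖ := by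
    intro v q hL
    rcases eq_or_ne v 0 with rfl | hv
    · simp [map_zero]
    · have hc : 0 < ‖v‖ := norm_pos_iff.mpr hv
      have h1 : ‖(‖v‖⁻¹ : ℝ) • v‖ ≤ 1 := by
        rw [norm_smul, norm_inv, norm_norm, inv_mul_cancel₀ hc.ne']
      have h2 := le_trans (le_iSup₂ (f := fun (w : H) (_ : ‖w‖ ≤ 1) =>
          (((1 / (n : ℝ)) * ∑ i, T w (x i) * (q (x i) - γ * q (x' i) - r i) : ℝ) : EReal))
          ((‖v‖⁻¹ : ℝ) • v) h1) hL
      rw [EReal.coe_le_coe_iff] at h2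
      have h3 : (1 / (n : ℝ)) * ∑ i, T ((‖v‖⁻¹ : ℝ) • v) (x i) * (q (x i) - γ * q (x' i) - r i)
          = ‖v‖⁻¹ * ((1 / (n : ℝ)) * ∑ i, T v (x i) * (q (x i) - γ * q (x' i) - r i)) := by
        simp only [LinearMap.map_smul, Pi.smul_apply, smul_eq_mul, mul_assoc]
        rw [← Finset.mul_sum]
        ring
      rw [h3] at h2
      have h4 := mul_le_mul_of_nonneg_left h2 hc.le
      calc (1 / (n : ℝ)) * ∑ i, T v (x i) * (q (x i) - γ * q (x' i) - r i)
          = ‖v‖ * (‖v‖⁻¹ * ((1 / (n : ℝ)) *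
              ∑ i, T v (x i) * (q (x i) - γ * q (x' i) - r i))) := by
            field_simp
        _ ≤ ‖v‖ * ε := h4
        _ = ε * ‖v‖ := by ring
  -- sum identity
  have hsum : ∀ (v : H) (q : X → ℝ),
      (1 / (n : ℝ)) * ∑ i, r i * T v (x i)
        + (1 / (n : ℝ)) * ∑ i, T v (x i) * (γ * q (x' i) - q (x i))
      = -((1 / (n : ℝ)) * ∑ i, T v (x i) * (q (x i) - γ * q (x' i) - r i)) := by
    intro v q
    have h : ∑ i, r i * T v (x i) + ∑ i, T v (x i) * (γ * q (x' i) - q (x i))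
        = -∑ i, T v (x i) * (q (x i) - γ * q (x' i) - r i) := by
      rw [← Finset.sum_neg_distrib, ← Finset.sum_add_distrib]
      exact Finset.sum_congr rfl fun i _ => by ring
    calc (1 / (n : ℝ)) * ∑ i, r i * T v (x i)
          + (1 / (n : ℝ)) * ∑ i, T v (x i) * (γ * q (x' i) - q (x i))
        = (1 / (n : ℝ)) * (∑ i, r i * T v (x i)
            + ∑ i, T v (x i) * (γ * q (x' i) - q (x i))) := by ring
      _ = (1 / (n : ℝ)) * (-∑ i, T v (x i) * (q (x i) - γ * q (x' i) - r i)) := by rw [h]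
      _ = -((1 / (n : ℝ)) * ∑ i, T v (x i) * (q (x i) - γ * q (x' i) - r i)) := by ring
  constructor
  · -- upper bound
    refine iSup₂_le fun q hq => iSup_le fun hL => ?_
    have hk := key ωp q hL
    have hreal : (∫ a, q a ∂μ0)
        ≤ (1 / (n : ℝ)) * ∑ i, r i * T ωp (x i)
          + ((1 / (n : ℝ)) * ∑ i, T ωp (x i) * (γ * q (x' i) - q (x i)) + ∫ a, q a ∂μ0)
          + ε * ‖ωp‖ := by
      have := hsum ωp q
      linarith
    have hBle : (((1 / (n : ℝ)) * ∑ i, T ωp (x i) * (γ * q (x' i) - q (x i))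
          + ∫ a, q a ∂μ0 : ℝ) : EReal)
        ≤ ⨆ (q : X → ℝ) (_ : q ∈ Q),
            (((1 / (n : ℝ)) * ∑ i, T ωp (x i) * (γ * q (x' i) - q (x i))
              + ∫ a, q a ∂μ0 : ℝ) : EReal) :=
      le_iSup₂ (f := fun (q : X → ℝ) (_ : q ∈ Q) =>
        (((1 / (n : ℝ)) * ∑ i, T ωp (x i) * (γ * q (x' i) - q (x i))
          + ∫ a, q a ∂μ0 : ℝ) : EReal)) q hq
    calc ((∫ a, q a ∂μ0 : ℝ) : EReal)
        ≤ (((1 / (n : ℝ)) * ∑ i, r i * T ωp (x i)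
            + ((1 / (n : ℝ)) * ∑ i, T ωp (x i) * (γ * q (x' i) - q (x i)) + ∫ a, q a ∂μ0)
            + ε * ‖ωp‖ : ℝ) : EReal) := EReal.coe_le_coe_iff.mpr hreal
      _ = (((1 / (n : ℝ)) * ∑ i, r i * T ωp (x i) : ℝ) : EReal)
          + (((1 / (n : ℝ)) * ∑ i, T ωp (x i) * (γ * q (x' i) - q (x i))
              + ∫ a, q a ∂μ0 : ℝ) : EReal)
          + ((ε * ‖ωp‖ : ℝ) : EReal) := by rw [EReal.coe_add, EReal.coe_add]
      _ ≤ _ := add_le_add (add_le_add le_rfl hBle) le_rfl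
  · -- lower bound
    refine le_iInf fun q => le_iInf fun hq => le_iInf fun hL => ?_
    have hk := key (-ωm) q hL
    have hk' : -((1 / (n : ℝ)) * ∑ i, T ωm (x i) * (q (x i) - γ * q (x' i) - r i))
        ≤ ε * ‖ωm‖ := by
      have hT : ∀ i, T (-ωm) (x i) = -(T ωm (x i)) := by
        intro i; rw [map_neg]; rfl
      simp only [hT, neg_mul, Finset.sum_neg_distrib, mul_neg, norm_neg] at hk
      exact hk
    have hneg : (1 / (n : ℝ)) * ∑ i, T ωm (x i) * (γ * (-q) (x' i) - (-q) (x i))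
          + ∫ a, (-q) a ∂μ0
        = -((1 / (n : ℝ)) * ∑ i, T ωm (x i) * (γ * q (x' i) - q (x i))) - ∫ a, q a ∂μ0 := by
      have h1 : ∑ i, T ωm (x i) * (γ * (-q) (x' i) - (-q) (x i))
          = -∑ i, T ωm (x i) * (γ * q (x' i) - q (x i)) := by
        rw [← Finset.sum_neg_distrib]
        exact Finset.sum_congr rfl fun i _ => by simp [Pi.neg_apply]; ring
      have h2 : ∫ a, (-q) a ∂μ0 = -∫ a, q a ∂μ0 := by
        simp [Pi.neg_apply, integral_neg]
      rw [h1, h2]; ring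
    have hCle : (((1 / (n : ℝ)) * ∑ i, T ωm (x i) * (γ * (-q) (x' i) - (-q) (x i))
          + ∫ a, (-q) a ∂μ0 : ℝ) : EReal)
        ≤ ⨆ (q : X → ℝ) (_ : -q ∈ Q),
            (((1 / (n : ℝ)) * ∑ i, T ωm (x i) * (γ * q (x' i) - q (x i))
              + ∫ a, q a ∂μ0 : ℝ) : EReal) :=
      le_iSup₂ (f := fun (q : X → ℝ) (_ : -q ∈ Q) =>
        (((1 / (n : ℝ)) * ∑ i, T ωm (x i) * (γ * q (x' i) - q (x i))
          + ∫ a, q a ∂μ0 : ℝ) : EReal)) (-q) (by simpa using hq)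
    have hreal : (1 / (n : ℝ)) * ∑ i, r i * T ωm (x i)
          - ((1 / (n : ℝ)) * ∑ i, T ωm (x i) * (γ * (-q) (x' i) - (-q) (x i))
            + ∫ a, (-q) a ∂μ0)
          - ε * ‖ωm‖ ≤ ∫ a, q a ∂μ0 := by
      rw [hneg]
      have := hsum ωm q
      linarith
    calc (((1 / (n : ℝ)) * ∑ i, r i * T ωm (x i) : ℝ) : EReal)
          - (⨆ (q : X → ℝ) (_ : -q ∈ Q),
              (((1 / (n : ℝ)) * ∑ i, T ωm (x i) * (γ * q (x' i) - q (x i))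
                + ∫ a, q a ∂μ0 : ℝ) : EReal))
          - ((ε * ‖ωm‖ : ℝ) : EReal)
        ≤ (((1 / (n : ℝ)) * ∑ i, r i * T ωm (x i) : ℝ) : EReal)
          - (((1 / (n : ℝ)) * ∑ i, T ωm (x i) * (γ * (-q) (x' i) - (-q) (x i))
              + ∫ a, (-q) a ∂μ0 : ℝ) : EReal)
          - ((ε * ‖ωm‖ : ℝ) : EReal) :=
          EReal.sub_le_sub (EReal.sub_le_sub le_rfl hCle) le_rfl
      _ = (((1 / (n : ℝ)) * ∑ i, r i * T ωm (x i)
            - ((1 / (n : ℝ)) * ∑ i, T ωm (x i) * (γ * (-q) (x' i) - (-q) (x i))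
              + ∫ a, (-q) a ∂μ0)
            - ε * ‖ωm‖ : ℝ) : EReal) := by rw [EReal.coe_sub, EReal.coe_sub]
      _ ≤ ((∫ a, q a ∂μ0 : ℝ) : EReal) := EReal.coe_le_coe_iff.mpr hreal
end

section
/- Let S be a measurable space in which singletons are measurable, A a set, X := S × A, γ ∈ (0,1), and let (s_i, a_i, r_i, s'_i, a'_i)_{i=1}^n be data points, with x_i := (s_i, a_i) and y_i := (s'_i, a'_i, r_i). Let q* : X → ℝ and define Q_{π,∞} := { q : X → ℝ : q is measurable and q(s_i, a_i) − γ·q(s'_i, a'_i) − r_i = q*(s_i, a_i) − γ·q*(s'_i, a'_i) − r_i for all i = 1,…,n }. Let μ be a probability measure on X such that q* is μ-integrable and μ( { (s,a) ∈ X : s ∉ {s_1,…,s_n, s'_1,…,s'_n} } ) > 0. Then the supremum over μ-integrable q ∈ Q_{π,∞} of ∫ q dμ equals +∞, and the infimum over μ-integrable q ∈ Q_{π,∞} of ∫ q dμ equals −∞ (in the extended reals). -/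
open MeasureTheory

/-!
Adding a constant `c` to `q⋆` on the set `E` of pairs whose state is none of the data states
leaves every empirical Bellman residual unchanged, and changes `∫ q dμ` by `c · μ(E)`.
Since `0 < μ(E) < ∞`, every real number is the integral of some `q ∈ Q_{π,∞}`.
-/

theorem EReal.biSup_coe_eq_top_of_forall_exists {ι : Type*} {P : ι → Prop} {f : ι → ℝ}
    (h : ∀ t : ℝ, ∃ i, P i ∧ f i = t) : ⨆ (i) (_ : P i), (f i : EReal) = ⊤ := by
  rw [iSup₂_eq_top]
  intro b hb
  obtain ⟨t, hbt, -⟩ := EReal.lt_iff_exists_real_btwn.1 hb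
  obtain ⟨i, hi, rfl⟩ := h t
  exact ⟨i, hi, hbt⟩

theorem EReal.biInf_coe_eq_bot_of_forall_exists {ι : Type*} {P : ι → Prop} {f : ι → ℝ}
    (h : ∀ t : ℝ, ∃ i, P i ∧ f i = t) : ⨅ (i) (_ : P i), (f i : EReal) = ⊥ := by
  rw [iInf₂_eq_bot]
  intro b hb
  obtain ⟨t, -, htb⟩ := EReal.lt_iff_exists_real_btwn.1 hb
  obtain ⟨i, hi, rfl⟩ := h t
  exact ⟨i, hi, htb⟩

theorem measurableSet_fst_ne_forall {S A ι : Type*} [MeasurableSpace S]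
    [MeasurableSingletonClass S] [MeasurableSpace A] [Countable ι] (s s' : ι → S) :
    MeasurableSet {p : S × A | ∀ i, p.1 ≠ s i ∧ p.1 ≠ s' i} := by
  simp only [Set.ofPred_forall, Set.ofPred_and]
  exact .iInter fun i =>
    (measurable_fst (measurableSet_singleton (s i))).compl.inter
      (measurable_fst (measurableSet_singleton (s' i))).compl

theorem exists_integral_eq_of_eqOn_compl {X : Type*} [MeasurableSpace X] {μ : Measure X}
    {f : X → ℝ} (hf : Measurable f) (hfi : Integrable f μ) {E : Set X} (hE : MeasurableSet E)
    (hμE₀ : 0 < μ E) (hμE : μ E ≠ ⊤) (t : ℝ) :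
    ∃ g : X → ℝ, Measurable g ∧ Integrable g μ ∧ Set.EqOn g f Eᶜ ∧ ∫ x, g x ∂μ = t := by
  have hm : 0 < μ.real E := ENNReal.toReal_pos hμE₀.ne' hμE
  set c := (t - ∫ x, f x ∂μ) / μ.real E
  have hci : Integrable (E.indicator fun _ => c) μ :=
    (integrable_indicator_iff hE).2 (integrableOn_const hμE)
  refine ⟨fun x => f x + E.indicator (fun _ => c) x, hf.add (measurable_const.indicator hE),
    hfi.add hci, fun x hx => by simp [Set.indicator_of_notMem hx], ?_⟩
  rw [integral_add hfi hci, integral_indicator_const c hE, smul_eq_mul,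
    mul_div_cancel₀ _ hm.ne']
  ring

theorem stmt_7_general
    {S : Type*} [MeasurableSpace S] [MeasurableSingletonClass S]
    {A : Type*} [MeasurableSpace A]
    (γ : ℝ)
    (n : ℕ)
    (s s' : Fin n → S) (a a' : Fin n → A) (r : Fin n → ℝ)
    (qstar : S × A → ℝ) (hqstar_meas : Measurable qstar)
    (μ : Measure (S × A)) [IsProbabilityMeasure μ]
    (hqstar_int : Integrable qstar μ)
    (hpos : 0 < μ {p : S × A | ∀ i : Fin n, p.1 ≠ s i ∧ p.1 ≠ s' i}) :
    (⨆ (q : S × A → ℝ)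
        (_ : Measurable q ∧
          (∀ i : Fin n, q (s i, a i) - γ * q (s' i, a' i) - r i
            = qstar (s i, a i) - γ * qstar (s' i, a' i) - r i) ∧
          Integrable q μ),
        ((∫ p, q p ∂μ : ℝ) : EReal)) = (⊤ : EReal)
    ∧ (⨅ (q : S × A → ℝ)
        (_ : Measurable q ∧
          (∀ i : Fin n, q (s i, a i) - γ * q (s' i, a' i) - r i
            = qstar (s i, a i) - γ * qstar (s' i, a' i) - r i) ∧
          Integrable q μ),
        ((∫ p, q p ∂μ : ℝ) : EReal)) = (⊥ : EReal) := by
  have hsurj : ∀ t : ℝ, ∃ q : S × A → ℝ,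
      (Measurable q ∧
        (∀ i : Fin n, q (s i, a i) - γ * q (s' i, a' i) - r i
          = qstar (s i, a i) - γ * qstar (s' i, a' i) - r i) ∧
        Integrable q μ) ∧ ∫ p, q p ∂μ = t := by
    intro t
    obtain ⟨q, hq_meas, hq_int, hq_eq, hq_integral⟩ :=
      exists_integral_eq_of_eqOn_compl hqstar_meas hqstar_int
        (measurableSet_fst_ne_forall s s') hpos (measure_ne_top μ _) t
    refine ⟨q, ⟨hq_meas, fun i => ?_, hq_int⟩, hq_integral⟩
    rw [hq_eq fun h => (h i).1 rfl, hq_eq fun h => (h i).2 rfl]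
  exact ⟨EReal.biSup_coe_eq_top_of_forall_exists hsurj,
    EReal.biInf_coe_eq_bot_of_forall_exists hsurj⟩

/-- Proposition `pro:free`: unless the data states almost surely cover the state space, the
supremum (resp. infimum) of `∫ q dμ` over integrable `q` in
`Q_{π,∞} = {q measurable : the empirical Bellman residuals of q agree with those of q⋆}`
is `+∞` (resp. `−∞`). -/
theorem stmt_7
    {S : Type*} [MeasurableSpace S] [MeasurableSingletonClass S]
    {A : Type*} [MeasurableSpace A]
    (γ : ℝ) (hγ : γ ∈ Set.Ioo (0 : ℝ) 1)
    (n : ℕ)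
    (s s' : Fin n → S) (a a' : Fin n → A) (r : Fin n → ℝ)
    (qstar : S × A → ℝ) (hqstar_meas : Measurable qstar)
    (μ : Measure (S × A)) [IsProbabilityMeasure μ]
    (hqstar_int : Integrable qstar μ)
    (hpos : 0 < μ {p : S × A | ∀ i : Fin n, p.1 ≠ s i ∧ p.1 ≠ s' i}) :
    (⨆ (q : S × A → ℝ)
        (_ : Measurable q ∧
          (∀ i : Fin n, q (s i, a i) - γ * q (s' i, a' i) - r i
            = qstar (s i, a i) - γ * qstar (s' i, a' i) - r i) ∧
          Integrable q μ),
        ((∫ p, q p ∂μ : ℝ) : EReal)) = (⊤ : EReal)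
    ∧ (⨅ (q : S × A → ℝ)
        (_ : Measurable q ∧
          (∀ i : Fin n, q (s i, a i) - γ * q (s' i, a' i) - r i
            = qstar (s i, a i) - γ * qstar (s' i, a' i) - r i) ∧
          Integrable q μ),
        ((∫ p, q p ∂μ : ℝ) : EReal)) = (⊥ : EReal) :=
  stmt_7_general γ n s s' a a' r qstar hqstar_meas μ hqstar_int hpos
end

section
/- Let X be a set, γ ∈ (0,1), μ0 a probability measure on X, D_n = (x_i, x'_i, r_i)_{i=1}^n a dataset, ε ≥ 0, H a real normed vector space with a linear map T : H → (X → ℝ), and Q a set of functions X → ℝ, each μ0-integrable. Define L_W(q; D_n) := sup_{ω ∈ H, ‖ω‖_H ≤ 1} (1/n) Σ_i (Tω)(x_i)·B̂q(x_i, x'_i, r_i), Ĵ⁺_{Q,W} := sup{ ∫ q dμ0 : q ∈ Q, L_W(q; D_n) ≤ ε }, and Ĵ⁻_{Q,W} := inf over the same set. Let d* be a finite measure on X × X × ℝ such that for every q ∈ Q the maps (x,x',r) ↦ q(x), q(x'), r are d*-integrable and ∫ ( γ·q(x') − q(x) ) dd*(x,x',r) = −∫ q dμ0, and set J* := ∫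 r dd*(x,x',r). Suppose there exist ω* ∈ H, c > 0 and α > 0 such that sup_{q ∈ Q} | (1/n) Σ_{i=1}^n (Tω*)(x_i)·B̂q(x_i,x'_i,r_i) − ∫ B̂q(x,x',r) dd*(x,x',r) | ≤ c / n^α. Then Ĵ⁺_{Q,W} ≤ J* + c/n^α + ε·‖ω*‖_H and Ĵ⁻_{Q,W} ≥ J* − c/n^α − ε·‖ω*‖_H. -/
open MeasureTheory

/-- Theorem `thm:uppergap` (tightness of the confidence interval): if the unit-ball critic class
contains a good density-ratio function `ω⋆` whose weighted empirical Bellman residuals are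
uniformly `c/n^α`-close to the residuals under the discounted visitation measure `d⋆`, then the
empirical confidence bounds satisfy `Ĵ⁺_{Q,W} ≤ J⋆ + c/n^α + ε‖ω⋆‖` and
`Ĵ⁻_{Q,W} ≥ J⋆ − c/n^α − ε‖ω⋆‖`. -/
theorem stmt_10
    {X : Type*} [MeasurableSpace X]
    (γ : ℝ) (hγ : γ ∈ Set.Ioo (0 : ℝ) 1)
    (μ0 : Measure X) [IsProbabilityMeasure μ0]
    (n : ℕ) (hn : 0 < n)
    (x x' : Fin n → X) (r : Fin n → ℝ)
    (ε : ℝ) (hε : 0 ≤ ε)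
    {H : Type*} [NormedAddCommGroup H] [NormedSpace ℝ H]
    (T : H →ₗ[ℝ] (X → ℝ))
    (Q : Set (X → ℝ)) (hQint : ∀ q ∈ Q, Integrable q μ0)
    (dstar : Measure (X × X × ℝ)) [IsFiniteMeasure dstar]
    (hint1 : ∀ q ∈ Q, Integrable (fun p : X × X × ℝ => q p.1) dstar)
    (hint2 : ∀ q ∈ Q, Integrable (fun p : X × X × ℝ => q p.2.1) dstar)
    (hintr : Integrable (fun p : X × X × ℝ => p.2.2) dstar)
    (hbal : ∀ q ∈ Q,
      ∫ p, (γ * q p.2.1 - q p.1) ∂dstar = - ∫ a, q a ∂μ0)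
    (Jstar : ℝ) (hJ : Jstar = ∫ p, p.2.2 ∂dstar)
    (ωstar : H) (c α : ℝ) (hc : 0 < c) (hα : 0 < α)
    (hbound : ∀ q ∈ Q,
      |(1 / (n : ℝ)) * ∑ i, T ωstar (x i) * (q (x i) - γ * q (x' i) - r i)
        - ∫ p, (q p.1 - γ * q p.2.1 - p.2.2) ∂dstar| ≤ c / (n : ℝ) ^ α) :
    -- Ĵ⁺_{Q,W} ≤ J⋆ + c/n^α + ε‖ω⋆‖
    ((⨆ (q : X → ℝ) (_ : q ∈ Q)
        (_ : (⨆ (w : H) (_ : ‖w‖ ≤ 1),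
            (((1 / (n : ℝ)) * ∑ i, T w (x i) * (q (x i) - γ * q (x' i) - r i) : ℝ) : EReal))
          ≤ (ε : EReal)),
        ((∫ a, q a ∂μ0 : ℝ) : EReal))
      ≤ ((Jstar + c / (n : ℝ) ^ α + ε * ‖ωstar‖ : ℝ) : EReal))
    -- Ĵ⁻_{Q,W} ≥ J⋆ − c/n^α − ε‖ω⋆‖
    ∧ (((Jstar - c / (n : ℝ) ^ α - ε * ‖ωstar‖ : ℝ) : EReal)
      ≤ ⨅ (q : X → ℝ) (_ : q ∈ Q)
          (_ : (⨆ (w : H) (_ : ‖w‖ ≤ 1),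
              (((1 / (n : ℝ)) * ∑ i, T w (x i) * (q (x i) - γ * q (x' i) - r i) : ℝ) : EReal))
            ≤ (ε : EReal)),
          ((∫ a, q a ∂μ0 : ℝ) : EReal)) := by
  -- main real-valued claim
  have key : ∀ q ∈ Q,
      (⨆ (w : H) (_ : ‖w‖ ≤ 1),
          (((1 / (n : ℝ)) * ∑ i, T w (x i) * (q (x i) - γ * q (x' i) - r i) : ℝ) : EReal))
        ≤ (ε : EReal) →
      |(∫ a, q a ∂μ0) - Jstar| ≤ c / (n : ℝ) ^ α + ε * ‖ωstar‖ := by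
    intro q hq hconstr
    set e : H → ℝ := fun w =>
      (1 / (n : ℝ)) * ∑ i, T w (x i) * (q (x i) - γ * q (x' i) - r i) with he
    have hsmul : ∀ (a : ℝ) (w : H), e (a • w) = a * e w := by
      intro a w
      simp only [he, LinearMap.map_smul, Pi.smul_apply, smul_eq_mul, mul_assoc,
        ← Finset.mul_sum]
      ring
    have hC : ∀ w : H, ‖w‖ ≤ 1 → e w ≤ ε := by
      intro w hw
      have h1 : ((e w : ℝ) : EReal) ≤ (ε : EReal) := by
        refine le_trans ?_ hconstr
        exact le_iSup₂ (f := fun (w : H) (_ : ‖w‖ ≤ 1) => ((e w : ℝ) : EReal)) w hw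
      exact_mod_cast h1
    -- bound |e ωstar| ≤ ε * ‖ωstar‖
    have habs : |e ωstar| ≤ ε * ‖ωstar‖ := by
      rcases eq_or_ne ωstar 0 with h0 | h0
      · have h00 : e ωstar = 0 := by
          simp only [he, h0, map_zero, Pi.zero_apply, zero_mul, Finset.sum_const_zero, mul_zero]
        rw [h00]
        simpa [h0] using mul_nonneg hε (norm_nonneg ωstar)
      · have hnorm : (0 : ℝ) < ‖ωstar‖ := norm_pos_iff.mpr h0
        have hu : ‖(‖ωstar‖⁻¹ • ωstar)‖ ≤ 1 := by
          rw [norm_smul, norm_inv, norm_norm, inv_mul_cancel₀ hnorm.ne']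
        have hu' : ‖(-‖ωstar‖⁻¹) • ωstar‖ ≤ 1 := by
          rw [norm_smul, norm_neg, norm_inv, norm_norm, inv_mul_cancel₀ hnorm.ne']
        have h1 := hC _ hu
        have h2 := hC _ hu'
        rw [hsmul] at h1 h2
        have key1 : ∀ y : ℝ, ‖ωstar‖⁻¹ * y ≤ ε → y ≤ ε * ‖ωstar‖ := by
          intro y hy
          have h := mul_le_mul_of_nonneg_left hy hnorm.le
          rw [← mul_assoc, mul_inv_cancel₀ hnorm.ne', one_mul] at h
          linarith
        have h1' : e ωstar ≤ ε * ‖ωstar‖ := key1 _ h1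
        have h2' : -(e ωstar) ≤ ε * ‖ωstar‖ := key1 _ (by linarith)
        rw [abs_le]
        exact ⟨by linarith, h1'⟩
    -- identify ∫ q dμ0 - Jstar with the d⋆ residual integral
    have hsplit : ∫ p, (q p.1 - γ * q p.2.1 - p.2.2) ∂dstar
        = (∫ a, q a ∂μ0) - Jstar := by
      have I1 := hint1 q hq
      have I2 : Integrable (fun p : X × X × ℝ => γ * q p.2.1) dstar :=
        (hint2 q hq).const_mul γ
      have h1 : ∫ p, (q p.1 - γ * q p.2.1 - p.2.2) ∂dstar
          = (∫ p, (q p.1 - γ * q p.2.1) ∂dstar) - ∫ p, p.2.2 ∂dstar :=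
        integral_sub (I1.sub I2) hintr
      have h2 : ∫ p, (q p.1 - γ * q p.2.1) ∂dstar
          = - ∫ p, (γ * q p.2.1 - q p.1) ∂dstar := by
        rw [← integral_neg]; congr 1; funext p; ring
      rw [h1, h2, hbal q hq, hJ]; ring
    have hb := hbound q hq
    rw [hsplit] at hb
    have := abs_sub_abs_le_abs_sub ((∫ a, q a ∂μ0) - Jstar) (e ωstar)
    have habs2 : |e ωstar - ((∫ a, q a ∂μ0) - Jstar)| ≤ c / (n : ℝ) ^ α := hb
    rw [abs_sub_comm] at habs2
    have htri : |(∫ a, q a ∂μ0) - Jstar|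
        ≤ |((∫ a, q a ∂μ0) - Jstar) - e ωstar| + |e ωstar| := by
      have h := abs_add_le (((∫ a, q a ∂μ0) - Jstar) - e ωstar) (e ωstar)
      simp only [sub_add_cancel] at h
      exact h
    linarith
  constructor
  · refine iSup_le fun q => iSup_le fun hq => iSup_le fun hconstr => ?_
    rw [EReal.coe_le_coe_iff]
    have := key q hq hconstr
    rw [abs_le] at this
    linarith [this.2]
  · refine le_iInf fun q => le_iInf fun hq => le_iInf fun hconstr => ?_
    rw [EReal.coe_le_coe_iff]
    have := key q hq hconstr
    rw [abs_le] at this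
    linarith [this.1]
end

section
/- Let H be a real Hilbert space, X a set, k̃ : X × X → ℝ a kernel with feature map φ : X → H (so ⟪φ(x), φ(x̄)⟫_H = k̃(x, x̄)), μ0 a probability measure on X for which φ is Bochner μ0-integrable, γ ∈ (0,1), points x_1, x'_1, …, x_n, x'_n ∈ X, and real weights w_1, …, w_n. Then sup_{h ∈ H, ‖h‖_H ≤ 1} { ∫ ⟪φ(x), h⟫_H dμ0(x) + (1/n) Σ_{i=1}^n w_i·( γ·⟪φ(x'_i), h⟫_H − ⟪φ(x_i), h⟫_H ) } = sqrt( A + 2B + C ), where A := ∫∫ k̃(x, x̄) dμ0(x) dμ0(x̄), B := (1/n) Σ_{i=1}^n w_i·∫ ( γ·k̃(x'_i, x̄) − k̃(x_i, x̄) ) dμ0(x̄), and C := (1/n²) Σ_{i,j=1}^n w_i·w_j·( γ²·k̃(x'_i, x'_j) − γ·k̃(x'_i, x_j) − γ·k̃(x_i, x'_j) + k̃(x_i, x_j) ); in particular A + 2B + C ≥ 0. -/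
open MeasureTheory
open scoped RealInnerProductSpace

/-- Closed form (Eq. `equ:Wfkernel`) of the discrepancy `I_Q(ω; D̂_n)` when `Q` is the unit ball
of the RKHS realized by the feature map `φ` of the kernel `k̃`: the supremum over the unit ball
of `∫⟪φ(x), h⟫ dμ0 + (1/n) ∑ᵢ wᵢ (γ⟪φ(x'ᵢ), h⟫ − ⟪φ(xᵢ), h⟫)` equals `sqrt(A + 2B + C)`. -/
theorem stmt_14
    {H : Type*} [NormedAddCommGroup H] [InnerProductSpace ℝ H] [CompleteSpace H]
    {X : Type*} [MeasurableSpace X]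
    (ktilde : X → X → ℝ) (φ : X → H)
    (hφ : ∀ x x' : X, ⟪φ x, φ x'⟫ = ktilde x x')
    (μ0 : Measure X) [IsProbabilityMeasure μ0]
    (hφint : Integrable φ μ0)
    (γ : ℝ) (hγ : γ ∈ Set.Ioo (0 : ℝ) 1)
    (n : ℕ) (hn : 0 < n)
    (x x' : Fin n → X) (w : Fin n → ℝ)
    (A B C : ℝ)
    (hA : A = ∫ a, (∫ b, ktilde a b ∂μ0) ∂μ0)
    (hB : B = (1 / (n : ℝ)) * ∑ i, w i *
      ∫ b, (γ * ktilde (x' i) b - ktilde (x i) b) ∂μ0)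
    (hC : C = (1 / (n : ℝ) ^ 2) * ∑ i, ∑ j, w i * w j *
      (γ ^ 2 * ktilde (x' i) (x' j) - γ * ktilde (x' i) (x j)
        - γ * ktilde (x i) (x' j) + ktilde (x i) (x j))) :
    (⨆ (h : H) (_ : ‖h‖ ≤ 1),
        ((∫ a, ⟪φ a, h⟫ ∂μ0)
          + (1 / (n : ℝ)) * ∑ i, w i * (γ * ⟪φ (x' i), h⟫ - ⟪φ (x i), h⟫)))
      = Real.sqrt (A + 2 * B + C)
    ∧ 0 ≤ A + 2 * B + C := by
  classical
  set u : Fin n → H := fun i => γ • φ (x' i) - φ (x i) with hu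
  set m : H := ∫ a, φ a ∂μ0 with hm
  set s : H := (1 / (n : ℝ)) • ∑ i, w i • u i with hs
  set v : H := m + s with hv
  have hui : ∀ i b, ⟪u i, φ b⟫ = γ * ktilde (x' i) b - ktilde (x i) b := by
    intro i b
    simp [hu, inner_sub_left, real_inner_smul_left, hφ]
  have huih : ∀ (i : Fin n) (h : H), ⟪u i, h⟫ = γ * ⟪φ (x' i), h⟫ - ⟪φ (x i), h⟫ := by
    intro i h
    simp [hu, inner_sub_left, real_inner_smul_left]
  have hφm : ∀ c : H, ∫ a, ⟪φ a, c⟫ ∂μ0 = ⟪m, c⟫ := by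
    intro c
    rw [real_inner_comm c m, hm, ← integral_inner hφint c]
    exact integral_congr_ae (Filter.Eventually.of_forall fun a => real_inner_comm _ _)
  -- A = ⟪m, m⟫
  have hAm : A = ⟪m, m⟫ := by
    rw [hA]
    have h1 : ∀ a, (∫ b, ktilde a b ∂μ0) = ⟪φ a, m⟫ := by
      intro a
      rw [hm, ← integral_inner hφint (φ a)]
      exact integral_congr_ae (Filter.Eventually.of_forall fun b => (hφ a b).symm)
    calc (∫ a, (∫ b, ktilde a b ∂μ0) ∂μ0) = ∫ a, ⟪φ a, m⟫ ∂μ0 :=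
          integral_congr_ae (Filter.Eventually.of_forall fun a => h1 a)
      _ = ⟪m, m⟫ := hφm m
  -- B = ⟪s, m⟫
  have hint_u : ∀ i : Fin n, (∫ b, (γ * ktilde (x' i) b - ktilde (x i) b) ∂μ0) = ⟪u i, m⟫ := by
    intro i
    rw [hm, ← integral_inner hφint (u i)]
    exact integral_congr_ae (Filter.Eventually.of_forall fun b => (hui i b).symm)
  have hBs : B = ⟪s, m⟫ := by
    rw [hB, hs, real_inner_smul_left, sum_inner]
    congr 1
    exact Finset.sum_congr rfl fun i _ => by rw [real_inner_smul_left, hint_u i]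
  -- C = ⟪s, s⟫
  have hksymm : ∀ a b : X, ktilde a b = ktilde b a := by
    intro a b
    rw [← hφ a b, ← hφ b a, real_inner_comm]
  have huu : ∀ i j : Fin n, ⟪u i, u j⟫ = γ ^ 2 * ktilde (x' i) (x' j) - γ * ktilde (x' i) (x j)
      - γ * ktilde (x i) (x' j) + ktilde (x i) (x j) := by
    intro i j
    simp only [hu, inner_sub_left, inner_sub_right, real_inner_smul_left,
      real_inner_smul_right, hφ]
    ring
  have hCs : C = ⟪s, s⟫ := by
    rw [hC, hs]
    simp only [real_inner_smul_left, real_inner_smul_right, sum_inner, inner_sum, huu,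
      Finset.mul_sum]
    refine Finset.sum_congr rfl fun i _ => Finset.sum_congr rfl fun j _ => ?_
    rw [hksymm (x' j) (x' i), hksymm (x' j) (x i), hksymm (x j) (x' i), hksymm (x j) (x i)]
    ring
  -- the integrand equals ⟪v, h⟫
  have hF : ∀ h : H, ((∫ a, ⟪φ a, h⟫ ∂μ0)
      + (1 / (n : ℝ)) * ∑ i, w i * (γ * ⟪φ (x' i), h⟫ - ⟪φ (x i), h⟫)) = ⟪v, h⟫ := by
    intro h
    rw [hv, inner_add_left, hφm h, hs, real_inner_smul_left, sum_inner]
    congr 2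
    exact Finset.sum_congr rfl fun i _ => by rw [real_inner_smul_left, huih i h]
  have hsum : A + 2 * B + C = ⟪v, v⟫ := by
    rw [hAm, hBs, hCs, hv]
    simp only [inner_add_left, inner_add_right]
    rw [real_inner_comm s m]
    ring
  have hvv : ⟪v, v⟫ = ‖v‖ ^ 2 := real_inner_self_eq_norm_sq v
  refine ⟨?_, by rw [hsum]; exact real_inner_self_nonneg⟩
  rw [hsum, hvv, Real.sqrt_sq (norm_nonneg v)]
  -- now compute the sup
  simp_rw [hF]
  have hub : ∀ h : H, ‖h‖ ≤ 1 → ⟪v, h⟫ ≤ ‖v‖ := by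
    intro h hh
    calc ⟪v, h⟫ ≤ ‖v‖ * ‖h‖ := real_inner_le_norm v h
      _ ≤ ‖v‖ := mul_le_of_le_one_right (norm_nonneg v) hh
  have hinner_le : ∀ h : H, (⨆ _ : ‖h‖ ≤ 1, ⟪v, h⟫) ≤ ‖v‖ :=
    fun h => Real.iSup_le (fun hh => hub h hh) (norm_nonneg v)
  apply le_antisymm
  · exact Real.iSup_le hinner_le (norm_nonneg v)
  · set h0 : H := ‖v‖⁻¹ • v with hh0
    have hh0norm : ‖h0‖ ≤ 1 := by
      rw [hh0, norm_smul, norm_inv, norm_norm]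
      rcases eq_or_ne ‖v‖ 0 with h | h
      · simp [h]
      · rw [inv_mul_cancel₀ h]
    have hval : ⟪v, h0⟫ = ‖v‖ := by
      rw [hh0, real_inner_smul_right, real_inner_self_eq_norm_mul_norm]
      rcases eq_or_ne ‖v‖ 0 with h | h
      · simp [h]
      · field_simp
    have hbdd : BddAbove (Set.range fun h : H => ⨆ _ : ‖h‖ ≤ 1, ⟪v, h⟫) := by
      refine ⟨‖v‖, ?_⟩
      rintro _ ⟨h, rfl⟩
      exact hinner_le h
    refine le_ciSup_of_le hbdd h0 ?_
    rw [ciSup_pos hh0norm, hval]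
end

section
/- Let X be a set, γ ∈ (0,1), μ0 a probability measure on X, q* : X → ℝ, ε ∈ ℝ, δ ∈ (0,1), and H a real normed vector space with a linear map T : H → (X → ℝ). Let (Ω, 𝔉, P) be a probability space and let the random dataset D_n(ω) = (X_i(ω), X'_i(ω), R_i(ω))_{i=1}^n take values in (X × X × ℝ)^n, and assume P( { ω : L_W(q*; D_n(ω)) ≤ ε } ) ≥ 1 − δ, where L_W(q; D) := sup_{v ∈ H, ‖v‖_H ≤ 1} (1/n) Σ_i (Tv)(x_i)·B̂q(x_i, x'_i, r_i) for D = (x_i, x'_i, r_i)_i. Let Q(·) assign to each dataset D a set Q(D) of μ0-integrable functions X → ℝ, and let ω₊(·), ω₋(·) assign to each dataset elements of H (all possibly depending arbitrarily on the data). For a dataset D define the oracle quantities Ĵ⁺_{Q(D),*}(D) := sup{ ∫ q dμ0 : q ∈ Q(D), B̂q(x_i,x'_i,r_i) = B̂q*(x_i,x'_i,r_i) for all i }, Ĵ⁻_{Q(D),*}(D) := inf over the same set, and the dual quantities F⁺_{Q(D)}(v; D) := (1/n) Σ_i r_i·(Tv)(x_i) + I_{Q(D)}(Tv; D) + ε·‖v‖_H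 and F⁻_{Q(D)}(v; D) := (1/n) Σ_i r_i·(Tv)(x_i) − I_{−Q(D)}(Tv; D) − ε·‖v‖_H. Then P( { ω : F⁻_{Q(D_n(ω))}(ω₋(D_n(ω)); D_n(ω)) ≤ Ĵ⁻_{Q(D_n(ω)),*}(D_n(ω)) and Ĵ⁺_{Q(D_n(ω)),*}(D_n(ω)) ≤ F⁺_{Q(D_n(ω))}(ω₊(D_n(ω)); D_n(ω)) } ) ≥ 1 − δ. -/
open MeasureTheory

/-- Data-dependent version of the dual confidence bound (Eq. `equ:CL`): for any data-dependent
choice of the function class `Q`, and any data-dependent `ω₊, ω₋` in `H`, on an event of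
probability at least `1 − δ` (given the tail bound for `L_W(q⋆; D_n)`), the oracle interval
`[Ĵ⁻_{Q,*}, Ĵ⁺_{Q,*}]` is contained in the dual interval `[F⁻(ω₋), F⁺(ω₊)]`. -/
theorem stmt_16
    {X : Type*} [MeasurableSpace X]
    (γ : ℝ) (hγ : γ ∈ Set.Ioo (0 : ℝ) 1)
    (μ0 : Measure X) [IsProbabilityMeasure μ0]
    (qstar : X → ℝ)
    (ε δ : ℝ) (hδ : δ ∈ Set.Ioo (0 : ℝ) 1)
    {H : Type*} [NormedAddCommGroup H] [NormedSpace ℝ H]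
    (T : H →ₗ[ℝ] (X → ℝ))
    (n : ℕ)
    {Ω : Type*} [MeasurableSpace Ω] (P : Measure Ω) [IsProbabilityMeasure P]
    (D : Ω → Fin n → X × X × ℝ)
    (Q : (Fin n → X × X × ℝ) → Set (X → ℝ))
    (hQint : ∀ d : Fin n → X × X × ℝ, ∀ q ∈ Q d, Integrable q μ0)
    (ωp ωm : (Fin n → X × X × ℝ) → H)
    (L : (X → ℝ) → (Fin n → X × X × ℝ) → EReal)
    (hL : ∀ (q : X → ℝ) (d : Fin n → X × X × ℝ),
      L q d = ⨆ (v : H) (_ : ‖v‖ ≤ 1),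
        (((1 / (n : ℝ)) * ∑ i, T v (d i).1
          * (q (d i).1 - γ * q (d i).2.1 - (d i).2.2) : ℝ) : EReal))
    (I : Set (X → ℝ) → (X → ℝ) → (Fin n → X × X × ℝ) → EReal)
    (hI : ∀ (S : Set (X → ℝ)) (v : X → ℝ) (d : Fin n → X × X × ℝ),
      I S v d = ⨆ (q : X → ℝ) (_ : q ∈ S),
        (((1 / (n : ℝ)) * ∑ i, v (d i).1 * (γ * q (d i).2.1 - q (d i).1)
          + ∫ a, q a ∂μ0 : ℝ) : EReal))
    (htail : ENNReal.ofReal (1 - δ) ≤ P {ω | L qstar (D ω) ≤ (ε : EReal)}) :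
    ENNReal.ofReal (1 - δ) ≤
      P {ω |
        -- F⁻(ω₋(D)) ≤ Ĵ⁻_{Q(D),*}(D)
        ((((1 / (n : ℝ)) * ∑ i, (D ω i).2.2 * T (ωm (D ω)) (D ω i).1 : ℝ) : EReal)
            - I ((fun q : X → ℝ => -q) '' Q (D ω)) (T (ωm (D ω))) (D ω)
            - ((ε * ‖ωm (D ω)‖ : ℝ) : EReal)
          ≤ ⨅ (q : X → ℝ) (_ : q ∈ Q (D ω))
              (_ : ∀ i : Fin n, q (D ω i).1 - γ * q (D ω i).2.1 - (D ω i).2.2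
                = qstar (D ω i).1 - γ * qstar (D ω i).2.1 - (D ω i).2.2),
              ((∫ a, q a ∂μ0 : ℝ) : EReal))
        -- Ĵ⁺_{Q(D),*}(D) ≤ F⁺(ω₊(D))
        ∧ ((⨆ (q : X → ℝ) (_ : q ∈ Q (D ω))
              (_ : ∀ i : Fin n, q (D ω i).1 - γ * q (D ω i).2.1 - (D ω i).2.2
                = qstar (D ω i).1 - γ * qstar (D ω i).2.1 - (D ω i).2.2),
              ((∫ a, q a ∂μ0 : ℝ) : EReal))
          ≤ (((1 / (n : ℝ)) * ∑ i, (D ω i).2.2 * T (ωp (D ω)) (D ω i).1 : ℝ) : EReal)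
            + I (Q (D ω)) (T (ωp (D ω))) (D ω)
            + ((ε * ‖ωp (D ω)‖ : ℝ) : EReal))} := by
  refine le_trans htail (measure_mono fun ω hω => ?_)
  simp only [Set.mem_setOf_eq] at hω ⊢
  set d := D ω with hd
  set f : H → ℝ := fun v =>
    (1 / (n : ℝ)) * ∑ i, T v (d i).1 * (qstar (d i).1 - γ * qstar (d i).2.1 - (d i).2.2)
    with hf
  have hterm : ∀ v : H, ‖v‖ ≤ 1 → f v ≤ ε := by
    intro v hv
    rw [hL] at hω
    have h1 : ((f v : ℝ) : EReal) ≤ (ε : EReal) :=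
      le_trans (le_iSup₂ (f := fun (v : H) (_ : ‖v‖ ≤ 1) =>
        (((1 / (n : ℝ)) * ∑ i, T v (d i).1
          * (qstar (d i).1 - γ * qstar (d i).2.1 - (d i).2.2) : ℝ) : EReal)) v hv) hω
    exact_mod_cast h1
  have hsmul : ∀ (c : ℝ) (v : H), f (c • v) = c * f v := by
    intro c v
    have hTc : ∀ x : X, T (c • v) x = c * T v x := fun x => by
      rw [T.map_smul]; rfl
    show (1 / (n : ℝ)) * ∑ i, T (c • v) (d i).1
        * (qstar (d i).1 - γ * qstar (d i).2.1 - (d i).2.2)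
      = c * ((1 / (n : ℝ)) * ∑ i, T v (d i).1
        * (qstar (d i).1 - γ * qstar (d i).2.1 - (d i).2.2))
    rw [show (∑ i, T (c • v) (d i).1 * (qstar (d i).1 - γ * qstar (d i).2.1 - (d i).2.2))
        = ∑ i, c * (T v (d i).1 * (qstar (d i).1 - γ * qstar (d i).2.1 - (d i).2.2)) from
      Finset.sum_congr rfl fun i _ => by rw [hTc]; ring, ← Finset.mul_sum]
    ring
  have key : ∀ v : H, f v ≤ ε * ‖v‖ := by
    intro v
    rcases eq_or_ne v 0 with rfl | hv
    · have h0 : f 0 = 0 := by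
        have := hsmul 0 0
        rwa [zero_smul, zero_mul] at this
      simp [h0]
    · have hnv : (0 : ℝ) < ‖v‖ := norm_pos_iff.2 hv
      have h1 : f (‖v‖⁻¹ • v) ≤ ε := hterm _ (by
        rw [norm_smul, norm_inv, norm_norm, inv_mul_cancel₀ hnv.ne'])
      rw [hsmul] at h1
      have h2 := mul_le_mul_of_nonneg_right h1 hnv.le
      rwa [mul_comm (‖v‖⁻¹) (f v), mul_assoc, inv_mul_cancel₀ hnv.ne', mul_one] at h2
  have hfneg : ∀ v : H, f (-v) = - f v := by
    intro v
    have := hsmul (-1) v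
    rwa [neg_one_smul, neg_one_mul] at this
  constructor
  · -- lower bound
    refine le_iInf fun q => le_iInf fun hq => le_iInf fun hfeas => ?_
    set v := ωm d with hv
    have hmem : (-q) ∈ (fun q : X → ℝ => -q) '' Q d := ⟨q, hq, rfl⟩
    have hIge : (((1 / (n : ℝ)) * ∑ i, T v (d i).1 * (γ * (-q) (d i).2.1 - (-q) (d i).1)
        + ∫ a, (-q) a ∂μ0 : ℝ) : EReal) ≤ I ((fun q : X → ℝ => -q) '' Q d) (T v) d := by
      rw [hI]
      exact le_iSup₂ (f := fun (q' : X → ℝ) (_ : q' ∈ (fun q : X → ℝ => -q) '' Q d) =>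
        (((1 / (n : ℝ)) * ∑ i, T v (d i).1 * (γ * q' (d i).2.1 - q' (d i).1)
          + ∫ a, q' a ∂μ0 : ℝ) : EReal)) (-q) hmem
    set a : ℝ := (1 / (n : ℝ)) * ∑ i, (d i).2.2 * T v (d i).1 with ha
    set c : ℝ := (1 / (n : ℝ)) * ∑ i, T v (d i).1 * (γ * (-q) (d i).2.1 - (-q) (d i).1)
        + ∫ x, (-q) x ∂μ0 with hc
    have hsub : ((a : ℝ) : EReal) - I ((fun q : X → ℝ => -q) '' Q d) (T v) d
        - ((ε * ‖v‖ : ℝ) : EReal) ≤ ((a - c - ε * ‖v‖ : ℝ) : EReal) := by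
      rw [EReal.coe_sub, EReal.coe_sub]
      exact EReal.sub_le_sub (EReal.sub_le_sub le_rfl hIge) le_rfl
    refine le_trans hsub ?_
    rw [EReal.coe_le_coe_iff]
    have hneg : ∫ x, (-q) x ∂μ0 = - ∫ x, q x ∂μ0 := by
      simp only [Pi.neg_apply]
      exact integral_neg q
    have hkey2 : - ((1 / (n : ℝ)) * ∑ i, T v (d i).1
        * (q (d i).1 - γ * q (d i).2.1 - (d i).2.2)) ≤ ε * ‖v‖ := by
      have h := key (-v)
      rw [norm_neg, hfneg] at h
      have hfq : f v = (1 / (n : ℝ)) * ∑ i, T v (d i).1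
          * (q (d i).1 - γ * q (d i).2.1 - (d i).2.2) := by
        show (1 / (n : ℝ)) * ∑ i, T v (d i).1
            * (qstar (d i).1 - γ * qstar (d i).2.1 - (d i).2.2) = _
        congr 1
        exact Finset.sum_congr rfl fun i _ => by rw [hfeas i]
      rwa [hfq] at h
    have hsum : ∑ i, ((d i).2.2 * T v (d i).1
          - T v (d i).1 * (γ * (-q) (d i).2.1 - (-q) (d i).1))
        = ∑ i, (-(T v (d i).1 * (q (d i).1 - γ * q (d i).2.1 - (d i).2.2))) :=
      Finset.sum_congr rfl fun i _ => by simp only [Pi.neg_apply]; ring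
    rw [Finset.sum_sub_distrib, Finset.sum_neg_distrib] at hsum
    have hmul : (1 / (n : ℝ)) * ∑ i, (d i).2.2 * T v (d i).1
        - (1 / (n : ℝ)) * ∑ i, T v (d i).1 * (γ * (-q) (d i).2.1 - (-q) (d i).1)
        = -((1 / (n : ℝ)) * ∑ i, T v (d i).1
            * (q (d i).1 - γ * q (d i).2.1 - (d i).2.2)) := by
      rw [← mul_sub, hsum, mul_neg]
    rw [hc, hneg, ha]
    linarith [hmul, hkey2]
  · -- upper bound
    refine iSup_le fun q => iSup_le fun hq => iSup_le fun hfeas => ?_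
    set v := ωp d with hv
    have hIge : (((1 / (n : ℝ)) * ∑ i, T v (d i).1 * (γ * q (d i).2.1 - q (d i).1)
        + ∫ a, q a ∂μ0 : ℝ) : EReal) ≤ I (Q d) (T v) d := by
      rw [hI]
      exact le_iSup₂ (f := fun (q' : X → ℝ) (_ : q' ∈ Q d) =>
        (((1 / (n : ℝ)) * ∑ i, T v (d i).1 * (γ * q' (d i).2.1 - q' (d i).1)
          + ∫ a, q' a ∂μ0 : ℝ) : EReal)) q hq
    set a : ℝ := (1 / (n : ℝ)) * ∑ i, (d i).2.2 * T v (d i).1 with ha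
    set c : ℝ := (1 / (n : ℝ)) * ∑ i, T v (d i).1 * (γ * q (d i).2.1 - q (d i).1)
        + ∫ x, q x ∂μ0 with hc
    have hkey2 : (1 / (n : ℝ)) * ∑ i, T v (d i).1
        * (q (d i).1 - γ * q (d i).2.1 - (d i).2.2) ≤ ε * ‖v‖ := by
      have h := key v
      have hfq : f v = (1 / (n : ℝ)) * ∑ i, T v (d i).1
          * (q (d i).1 - γ * q (d i).2.1 - (d i).2.2) := by
        show (1 / (n : ℝ)) * ∑ i, T v (d i).1
            * (qstar (d i).1 - γ * qstar (d i).2.1 - (d i).2.2) = _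
        congr 1
        exact Finset.sum_congr rfl fun i _ => by rw [hfeas i]
      rwa [hfq] at h
    have hsum : ∑ i, ((d i).2.2 * T v (d i).1
          + T v (d i).1 * (γ * q (d i).2.1 - q (d i).1))
        = ∑ i, (-(T v (d i).1 * (q (d i).1 - γ * q (d i).2.1 - (d i).2.2))) :=
      Finset.sum_congr rfl fun i _ => by ring
    rw [Finset.sum_add_distrib, Finset.sum_neg_distrib] at hsum
    have hmul : (1 / (n : ℝ)) * ∑ i, (d i).2.2 * T v (d i).1
        + (1 / (n : ℝ)) * ∑ i, T v (d i).1 * (γ * q (d i).2.1 - q (d i).1)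
        = -((1 / (n : ℝ)) * ∑ i, T v (d i).1
            * (q (d i).1 - γ * q (d i).2.1 - (d i).2.2)) := by
      rw [← mul_add, hsum, mul_neg]
    have hreal : ∫ x, q x ∂μ0 ≤ a + c + ε * ‖v‖ := by
      rw [hc, ha]
      linarith [hmul, hkey2]
    calc ((∫ x, q x ∂μ0 : ℝ) : EReal) ≤ ((a + c + ε * ‖v‖ : ℝ) : EReal) :=
          EReal.coe_le_coe_iff.2 hreal
      _ = ((a : ℝ) : EReal) + ((c : ℝ) : EReal) + ((ε * ‖v‖ : ℝ) : EReal) := by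
          rw [EReal.coe_add, EReal.coe_add]
      _ ≤ ((a : ℝ) : EReal) + I (Q d) (T v) d + ((ε * ‖v‖ : ℝ) : EReal) :=
          add_le_add (add_le_add le_rfl hIge) le_rfl
end
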